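/- arXiv:2005.09201 — 9 statements merged into one kernel-verified Lean document; each statement's English description precedes it below -/
import Mathlib

section
/- Let B = {b_1 < b_2 < b_3 < …} be an infinite strictly increasing sequence of integers with b_1 ≥ 11, b_2 = 3b_1 + 5, b_3 = 3b_2 + 2, and b_{n+1} = 3b_n + 4b_{n-1} for all n ≥ 3. Then there exists an infinite strictly increasing sequence A = {a_1 < a_2 < …} of positive integers such that P(A) = ℕ \ B (where B is identified with its set of values). -/
/-- The set of all finite subset sums of `A`: all sums of finitely many
pairwise distinct elements of `A`; by convention `0 ∈ subsetSums A`. -/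
def subsetSums (A : Set ℕ) : Set ℕ :=
  {n | ∃ F : Finset ℕ, ↑F ⊆ A ∧ F.sum id = n}



lemma subsetSums_mono {A B : Set ℕ} (h : A ⊆ B) : subsetSums A ⊆ subsetSums B := by
  rintro x ⟨F, hF, rfl⟩
  exact ⟨F, hF.trans h, rfl⟩

lemma zero_mem_subsetSums (A : Set ℕ) : 0 ∈ subsetSums A :=
  ⟨∅, by simp, by simp⟩

lemma subsetSums_coe_insert (a : ℕ) (S : Finset ℕ) (ha : a ∉ S) :
    subsetSums ↑(insert a S) = subsetSums ↑S ∪ (fun x => a + x) '' subsetSums ↑S := by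
  ext x
  constructor
  · rintro ⟨F, hF, rfl⟩
    by_cases haF : a ∈ F
    · right
      refine ⟨(F.erase a).sum id, ⟨F.erase a, ?_, rfl⟩, ?_⟩
      · intro y hy
        simp only [Finset.coe_erase, Set.mem_diff] at hy
        have := hF hy.1
        simp only [Finset.coe_insert, Set.mem_insert_iff] at this
        rcases this with h | h
        · exact absurd h hy.2
        · exact h
      · exact (Finset.add_sum_erase F id haF).symm ▸ rfl
    · left
      refine ⟨F, ?_, rfl⟩
      intro y hy
      have := hF hy
      simp only [Finset.coe_insert, Set.mem_insert_iff] at this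
      rcases this with h | h
      · exact absurd (h ▸ hy) haF
      · exact h
  · rintro (⟨F, hF, rfl⟩ | ⟨p, ⟨F, hF, rfl⟩, rfl⟩)
    · exact ⟨F, hF.trans (by simp), rfl⟩
    · have haF : a ∉ F := fun h => ha (by exact_mod_cast hF h)
      refine ⟨insert a F, ?_, ?_⟩
      · intro y hy
        simp only [Finset.coe_insert, Set.mem_insert_iff] at hy ⊢
        rcases hy with h | h
        · exact Or.inl h
        · exact Or.inr (hF h)
      · simp [Finset.sum_insert haF]

lemma subsetSums_coe_empty : subsetSums ↑(∅ : Finset ℕ) = {0} := by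
  ext x
  constructor
  · rintro ⟨F, hF, rfl⟩
    have : F = ∅ := Finset.subset_empty.mp (by exact_mod_cast hF)
    simp [this]
  · rintro rfl
    exact zero_mem_subsetSums _


lemma grow_lemma (S : Finset ℕ) (t a : ℕ) (ha : a ∉ S) (ha0 : 0 < a) (hle : a ≤ t + 1)
    (hsums : subsetSums ↑S = Set.Iic t) :
    subsetSums ↑(insert a S) = Set.Iic (t + a) := by
  rw [subsetSums_coe_insert a S ha, hsums]
  ext x
  simp only [Set.mem_union, Set.mem_image, Set.mem_Iic]
  constructor
  · rintro (h | ⟨p, hp, rfl⟩) <;> omega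
  · intro hx
    by_cases h : x ≤ t
    · exact Or.inl h
    · exact Or.inr ⟨x - a, by omega, by omega⟩

lemma block_lemma : ∀ T : ℕ, 10 ≤ T → ∃ S : Finset ℕ,
    (∀ x ∈ S, 0 < x ∧ 2 * x ≤ T + 2) ∧ S.sum id = T ∧ subsetSums ↑S = Set.Iic T := by
  intro T
  induction T using Nat.strong_induction_on with
  | _ T ih =>
  intro hT
  by_cases hbig : 21 ≤ T
  · obtain ⟨S, hSb, hSsum, hSsums⟩ := ih (T / 2) (by omega) (by omega)
    have ha : (T - T / 2) ∉ S := by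
      intro h
      have := hSb _ h
      omega
    refine ⟨insert (T - T / 2) S, ?_, ?_, ?_⟩
    · intro x hx
      rcases Finset.mem_insert.mp hx with rfl | hx
      · omega
      · have := hSb x hx; omega
    · rw [Finset.sum_insert ha, hSsum]; simp only [id_eq]; omega
    · have h9 : T / 2 + (T - T / 2) = T := by omega
      have := grow_lemma S (T / 2) (T - T / 2) ha (by omega) (by omega) hSsums
      rw [h9] at this
      exact this
  -- base cases 10..20
  interval_cases T
  · refine ⟨(insert 4 (insert 3 (insert 2 (insert 1 (∅:Finset ℕ))))), by decide, by decide, ?_⟩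
    have h0 : subsetSums ↑(∅:Finset ℕ) = Set.Iic 0 := by rw [subsetSums_coe_empty]; ext x; simp
    have h1 : subsetSums ↑(insert 1 (∅:Finset ℕ)) = Set.Iic 1 := by
      have := grow_lemma (∅:Finset ℕ) 0 1 (by decide) (by decide) (by decide) h0
      norm_num at this ⊢; try exact this
    have h2 : subsetSums ↑(insert 2 (insert 1 (∅:Finset ℕ))) = Set.Iic 3 := by
      have := grow_lemma (insert 1 (∅:Finset ℕ)) 1 2 (by decide) (by decide) (by decide) h1
      norm_num at this ⊢; try exact this
    have h3 : subsetSums ↑(insert 3 (insert 2 (insert 1 (∅:Finset ℕ)))) = Set.Iic 6 := by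
      have := grow_lemma (insert 2 (insert 1 (∅:Finset ℕ))) 3 3 (by decide) (by decide) (by decide) h2
      norm_num at this ⊢; try exact this
    have h4 : subsetSums ↑(insert 4 (insert 3 (insert 2 (insert 1 (∅:Finset ℕ))))) = Set.Iic 10 := by
      have := grow_lemma (insert 3 (insert 2 (insert 1 (∅:Finset ℕ)))) 6 4 (by decide) (by decide) (by decide) h3
      norm_num at this ⊢; try exact this
    exact h4
  · refine ⟨(insert 5 (insert 3 (insert 2 (insert 1 (∅:Finset ℕ))))), by decide, by decide, ?_⟩
    have h0 : subsetSums ↑(∅:Finset ℕ) = Set.Iic 0 := by rw [subsetSums_coe_empty]; ext x; simp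
    have h1 : subsetSums ↑(insert 1 (∅:Finset ℕ)) = Set.Iic 1 := by
      have := grow_lemma (∅:Finset ℕ) 0 1 (by decide) (by decide) (by decide) h0
      norm_num at this ⊢; try exact this
    have h2 : subsetSums ↑(insert 2 (insert 1 (∅:Finset ℕ))) = Set.Iic 3 := by
      have := grow_lemma (insert 1 (∅:Finset ℕ)) 1 2 (by decide) (by decide) (by decide) h1
      norm_num at this ⊢; try exact this
    have h3 : subsetSums ↑(insert 3 (insert 2 (insert 1 (∅:Finset ℕ)))) = Set.Iic 6 := by
      have := grow_lemma (insert 2 (insert 1 (∅:Finset ℕ))) 3 3 (by decide) (by decide) (by decide) h2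
      norm_num at this ⊢; try exact this
    have h4 : subsetSums ↑(insert 5 (insert 3 (insert 2 (insert 1 (∅:Finset ℕ))))) = Set.Iic 11 := by
      have := grow_lemma (insert 3 (insert 2 (insert 1 (∅:Finset ℕ)))) 6 5 (by decide) (by decide) (by decide) h3
      norm_num at this ⊢; try exact this
    exact h4
  · refine ⟨(insert 6 (insert 3 (insert 2 (insert 1 (∅:Finset ℕ))))), by decide, by decide, ?_⟩
    have h0 : subsetSums ↑(∅:Finset ℕ) = Set.Iic 0 := by rw [subsetSums_coe_empty]; ext x; simp
    have h1 : subsetSums ↑(insert 1 (∅:Finset ℕ)) = Set.Iic 1 := by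
      have := grow_lemma (∅:Finset ℕ) 0 1 (by decide) (by decide) (by decide) h0
      norm_num at this ⊢; try exact this
    have h2 : subsetSums ↑(insert 2 (insert 1 (∅:Finset ℕ))) = Set.Iic 3 := by
      have := grow_lemma (insert 1 (∅:Finset ℕ)) 1 2 (by decide) (by decide) (by decide) h1
      norm_num at this ⊢; try exact this
    have h3 : subsetSums ↑(insert 3 (insert 2 (insert 1 (∅:Finset ℕ)))) = Set.Iic 6 := by
      have := grow_lemma (insert 2 (insert 1 (∅:Finset ℕ))) 3 3 (by decide) (by decide) (by decide) h2
      norm_num at this ⊢; try exact this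
    have h4 : subsetSums ↑(insert 6 (insert 3 (insert 2 (insert 1 (∅:Finset ℕ))))) = Set.Iic 12 := by
      have := grow_lemma (insert 3 (insert 2 (insert 1 (∅:Finset ℕ)))) 6 6 (by decide) (by decide) (by decide) h3
      norm_num at this ⊢; try exact this
    exact h4
  · refine ⟨(insert 7 (insert 3 (insert 2 (insert 1 (∅:Finset ℕ))))), by decide, by decide, ?_⟩
    have h0 : subsetSums ↑(∅:Finset ℕ) = Set.Iic 0 := by rw [subsetSums_coe_empty]; ext x; simp
    have h1 : subsetSums ↑(insert 1 (∅:Finset ℕ)) = Set.Iic 1 := by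
      have := grow_lemma (∅:Finset ℕ) 0 1 (by decide) (by decide) (by decide) h0
      norm_num at this ⊢; try exact this
    have h2 : subsetSums ↑(insert 2 (insert 1 (∅:Finset ℕ))) = Set.Iic 3 := by
      have := grow_lemma (insert 1 (∅:Finset ℕ)) 1 2 (by decide) (by decide) (by decide) h1
      norm_num at this ⊢; try exact this
    have h3 : subsetSums ↑(insert 3 (insert 2 (insert 1 (∅:Finset ℕ)))) = Set.Iic 6 := by
      have := grow_lemma (insert 2 (insert 1 (∅:Finset ℕ))) 3 3 (by decide) (by decide) (by decide) h2
      norm_num at this ⊢; try exact this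
    have h4 : subsetSums ↑(insert 7 (insert 3 (insert 2 (insert 1 (∅:Finset ℕ))))) = Set.Iic 13 := by
      have := grow_lemma (insert 3 (insert 2 (insert 1 (∅:Finset ℕ)))) 6 7 (by decide) (by decide) (by decide) h3
      norm_num at this ⊢; try exact this
    exact h4
  · refine ⟨(insert 7 (insert 4 (insert 2 (insert 1 (∅:Finset ℕ))))), by decide, by decide, ?_⟩
    have h0 : subsetSums ↑(∅:Finset ℕ) = Set.Iic 0 := by rw [subsetSums_coe_empty]; ext x; simp
    have h1 : subsetSums ↑(insert 1 (∅:Finset ℕ)) = Set.Iic 1 := by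
      have := grow_lemma (∅:Finset ℕ) 0 1 (by decide) (by decide) (by decide) h0
      norm_num at this ⊢; try exact this
    have h2 : subsetSums ↑(insert 2 (insert 1 (∅:Finset ℕ))) = Set.Iic 3 := by
      have := grow_lemma (insert 1 (∅:Finset ℕ)) 1 2 (by decide) (by decide) (by decide) h1
      norm_num at this ⊢; try exact this
    have h3 : subsetSums ↑(insert 4 (insert 2 (insert 1 (∅:Finset ℕ)))) = Set.Iic 7 := by
      have := grow_lemma (insert 2 (insert 1 (∅:Finset ℕ))) 3 4 (by decide) (by decide) (by decide) h2
      norm_num at this ⊢; try exact this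
    have h4 : subsetSums ↑(insert 7 (insert 4 (insert 2 (insert 1 (∅:Finset ℕ))))) = Set.Iic 14 := by
      have := grow_lemma (insert 4 (insert 2 (insert 1 (∅:Finset ℕ)))) 7 7 (by decide) (by decide) (by decide) h3
      norm_num at this ⊢; try exact this
    exact h4
  · refine ⟨(insert 5 (insert 4 (insert 3 (insert 2 (insert 1 (∅:Finset ℕ)))))), by decide, by decide, ?_⟩
    have h0 : subsetSums ↑(∅:Finset ℕ) = Set.Iic 0 := by rw [subsetSums_coe_empty]; ext x; simp
    have h1 : subsetSums ↑(insert 1 (∅:Finset ℕ)) = Set.Iic 1 := by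
      have := grow_lemma (∅:Finset ℕ) 0 1 (by decide) (by decide) (by decide) h0
      norm_num at this ⊢; try exact this
    have h2 : subsetSums ↑(insert 2 (insert 1 (∅:Finset ℕ))) = Set.Iic 3 := by
      have := grow_lemma (insert 1 (∅:Finset ℕ)) 1 2 (by decide) (by decide) (by decide) h1
      norm_num at this ⊢; try exact this
    have h3 : subsetSums ↑(insert 3 (insert 2 (insert 1 (∅:Finset ℕ)))) = Set.Iic 6 := by
      have := grow_lemma (insert 2 (insert 1 (∅:Finset ℕ))) 3 3 (by decide) (by decide) (by decide) h2
      norm_num at this ⊢; try exact this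
    have h4 : subsetSums ↑(insert 4 (insert 3 (insert 2 (insert 1 (∅:Finset ℕ))))) = Set.Iic 10 := by
      have := grow_lemma (insert 3 (insert 2 (insert 1 (∅:Finset ℕ)))) 6 4 (by decide) (by decide) (by decide) h3
      norm_num at this ⊢; try exact this
    have h5 : subsetSums ↑(insert 5 (insert 4 (insert 3 (insert 2 (insert 1 (∅:Finset ℕ)))))) = Set.Iic 15 := by
      have := grow_lemma (insert 4 (insert 3 (insert 2 (insert 1 (∅:Finset ℕ))))) 10 5 (by decide) (by decide) (by decide) h4
      norm_num at this ⊢; try exact this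
    exact h5
  · refine ⟨(insert 6 (insert 4 (insert 3 (insert 2 (insert 1 (∅:Finset ℕ)))))), by decide, by decide, ?_⟩
    have h0 : subsetSums ↑(∅:Finset ℕ) = Set.Iic 0 := by rw [subsetSums_coe_empty]; ext x; simp
    have h1 : subsetSums ↑(insert 1 (∅:Finset ℕ)) = Set.Iic 1 := by
      have := grow_lemma (∅:Finset ℕ) 0 1 (by decide) (by decide) (by decide) h0
      norm_num at this ⊢; try exact this
    have h2 : subsetSums ↑(insert 2 (insert 1 (∅:Finset ℕ))) = Set.Iic 3 := by
      have := grow_lemma (insert 1 (∅:Finset ℕ)) 1 2 (by decide) (by decide) (by decide) h1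
      norm_num at this ⊢; try exact this
    have h3 : subsetSums ↑(insert 3 (insert 2 (insert 1 (∅:Finset ℕ)))) = Set.Iic 6 := by
      have := grow_lemma (insert 2 (insert 1 (∅:Finset ℕ))) 3 3 (by decide) (by decide) (by decide) h2
      norm_num at this ⊢; try exact this
    have h4 : subsetSums ↑(insert 4 (insert 3 (insert 2 (insert 1 (∅:Finset ℕ))))) = Set.Iic 10 := by
      have := grow_lemma (insert 3 (insert 2 (insert 1 (∅:Finset ℕ)))) 6 4 (by decide) (by decide) (by decide) h3
      norm_num at this ⊢; try exact this
    have h5 : subsetSums ↑(insert 6 (insert 4 (insert 3 (insert 2 (insert 1 (∅:Finset ℕ)))))) = Set.Iic 16 := by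
      have := grow_lemma (insert 4 (insert 3 (insert 2 (insert 1 (∅:Finset ℕ))))) 10 6 (by decide) (by decide) (by decide) h4
      norm_num at this ⊢; try exact this
    exact h5
  · refine ⟨(insert 7 (insert 4 (insert 3 (insert 2 (insert 1 (∅:Finset ℕ)))))), by decide, by decide, ?_⟩
    have h0 : subsetSums ↑(∅:Finset ℕ) = Set.Iic 0 := by rw [subsetSums_coe_empty]; ext x; simp
    have h1 : subsetSums ↑(insert 1 (∅:Finset ℕ)) = Set.Iic 1 := by
      have := grow_lemma (∅:Finset ℕ) 0 1 (by decide) (by decide) (by decide) h0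
      norm_num at this ⊢; try exact this
    have h2 : subsetSums ↑(insert 2 (insert 1 (∅:Finset ℕ))) = Set.Iic 3 := by
      have := grow_lemma (insert 1 (∅:Finset ℕ)) 1 2 (by decide) (by decide) (by decide) h1
      norm_num at this ⊢; try exact this
    have h3 : subsetSums ↑(insert 3 (insert 2 (insert 1 (∅:Finset ℕ)))) = Set.Iic 6 := by
      have := grow_lemma (insert 2 (insert 1 (∅:Finset ℕ))) 3 3 (by decide) (by decide) (by decide) h2
      norm_num at this ⊢; try exact this
    have h4 : subsetSums ↑(insert 4 (insert 3 (insert 2 (insert 1 (∅:Finset ℕ))))) = Set.Iic 10 := by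
      have := grow_lemma (insert 3 (insert 2 (insert 1 (∅:Finset ℕ)))) 6 4 (by decide) (by decide) (by decide) h3
      norm_num at this ⊢; try exact this
    have h5 : subsetSums ↑(insert 7 (insert 4 (insert 3 (insert 2 (insert 1 (∅:Finset ℕ)))))) = Set.Iic 17 := by
      have := grow_lemma (insert 4 (insert 3 (insert 2 (insert 1 (∅:Finset ℕ))))) 10 7 (by decide) (by decide) (by decide) h4
      norm_num at this ⊢; try exact this
    exact h5
  · refine ⟨(insert 8 (insert 4 (insert 3 (insert 2 (insert 1 (∅:Finset ℕ)))))), by decide, by decide, ?_⟩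
    have h0 : subsetSums ↑(∅:Finset ℕ) = Set.Iic 0 := by rw [subsetSums_coe_empty]; ext x; simp
    have h1 : subsetSums ↑(insert 1 (∅:Finset ℕ)) = Set.Iic 1 := by
      have := grow_lemma (∅:Finset ℕ) 0 1 (by decide) (by decide) (by decide) h0
      norm_num at this ⊢; try exact this
    have h2 : subsetSums ↑(insert 2 (insert 1 (∅:Finset ℕ))) = Set.Iic 3 := by
      have := grow_lemma (insert 1 (∅:Finset ℕ)) 1 2 (by decide) (by decide) (by decide) h1
      norm_num at this ⊢; try exact this
    have h3 : subsetSums ↑(insert 3 (insert 2 (insert 1 (∅:Finset ℕ)))) = Set.Iic 6 := by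
      have := grow_lemma (insert 2 (insert 1 (∅:Finset ℕ))) 3 3 (by decide) (by decide) (by decide) h2
      norm_num at this ⊢; try exact this
    have h4 : subsetSums ↑(insert 4 (insert 3 (insert 2 (insert 1 (∅:Finset ℕ))))) = Set.Iic 10 := by
      have := grow_lemma (insert 3 (insert 2 (insert 1 (∅:Finset ℕ)))) 6 4 (by decide) (by decide) (by decide) h3
      norm_num at this ⊢; try exact this
    have h5 : subsetSums ↑(insert 8 (insert 4 (insert 3 (insert 2 (insert 1 (∅:Finset ℕ)))))) = Set.Iic 18 := by
      have := grow_lemma (insert 4 (insert 3 (insert 2 (insert 1 (∅:Finset ℕ))))) 10 8 (by decide) (by decide) (by decide) h4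
      norm_num at this ⊢; try exact this
    exact h5
  · refine ⟨(insert 9 (insert 4 (insert 3 (insert 2 (insert 1 (∅:Finset ℕ)))))), by decide, by decide, ?_⟩
    have h0 : subsetSums ↑(∅:Finset ℕ) = Set.Iic 0 := by rw [subsetSums_coe_empty]; ext x; simp
    have h1 : subsetSums ↑(insert 1 (∅:Finset ℕ)) = Set.Iic 1 := by
      have := grow_lemma (∅:Finset ℕ) 0 1 (by decide) (by decide) (by decide) h0
      norm_num at this ⊢; try exact this
    have h2 : subsetSums ↑(insert 2 (insert 1 (∅:Finset ℕ))) = Set.Iic 3 := by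
      have := grow_lemma (insert 1 (∅:Finset ℕ)) 1 2 (by decide) (by decide) (by decide) h1
      norm_num at this ⊢; try exact this
    have h3 : subsetSums ↑(insert 3 (insert 2 (insert 1 (∅:Finset ℕ)))) = Set.Iic 6 := by
      have := grow_lemma (insert 2 (insert 1 (∅:Finset ℕ))) 3 3 (by decide) (by decide) (by decide) h2
      norm_num at this ⊢; try exact this
    have h4 : subsetSums ↑(insert 4 (insert 3 (insert 2 (insert 1 (∅:Finset ℕ))))) = Set.Iic 10 := by
      have := grow_lemma (insert 3 (insert 2 (insert 1 (∅:Finset ℕ)))) 6 4 (by decide) (by decide) (by decide) h3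
      norm_num at this ⊢; try exact this
    have h5 : subsetSums ↑(insert 9 (insert 4 (insert 3 (insert 2 (insert 1 (∅:Finset ℕ)))))) = Set.Iic 19 := by
      have := grow_lemma (insert 4 (insert 3 (insert 2 (insert 1 (∅:Finset ℕ))))) 10 9 (by decide) (by decide) (by decide) h4
      norm_num at this ⊢; try exact this
    exact h5
  · refine ⟨(insert 10 (insert 4 (insert 3 (insert 2 (insert 1 (∅:Finset ℕ)))))), by decide, by decide, ?_⟩
    have h0 : subsetSums ↑(∅:Finset ℕ) = Set.Iic 0 := by rw [subsetSums_coe_empty]; ext x; simp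
    have h1 : subsetSums ↑(insert 1 (∅:Finset ℕ)) = Set.Iic 1 := by
      have := grow_lemma (∅:Finset ℕ) 0 1 (by decide) (by decide) (by decide) h0
      norm_num at this ⊢; try exact this
    have h2 : subsetSums ↑(insert 2 (insert 1 (∅:Finset ℕ))) = Set.Iic 3 := by
      have := grow_lemma (insert 1 (∅:Finset ℕ)) 1 2 (by decide) (by decide) (by decide) h1
      norm_num at this ⊢; try exact this
    have h3 : subsetSums ↑(insert 3 (insert 2 (insert 1 (∅:Finset ℕ)))) = Set.Iic 6 := by
      have := grow_lemma (insert 2 (insert 1 (∅:Finset ℕ))) 3 3 (by decide) (by decide) (by decide) h2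
      norm_num at this ⊢; try exact this
    have h4 : subsetSums ↑(insert 4 (insert 3 (insert 2 (insert 1 (∅:Finset ℕ))))) = Set.Iic 10 := by
      have := grow_lemma (insert 3 (insert 2 (insert 1 (∅:Finset ℕ)))) 6 4 (by decide) (by decide) (by decide) h3
      norm_num at this ⊢; try exact this
    have h5 : subsetSums ↑(insert 10 (insert 4 (insert 3 (insert 2 (insert 1 (∅:Finset ℕ)))))) = Set.Iic 20 := by
      have := grow_lemma (insert 4 (insert 3 (insert 2 (insert 1 (∅:Finset ℕ))))) 10 10 (by decide) (by decide) (by decide) h4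
      norm_num at this ⊢; try exact this
    exact h5


lemma step_lemma (BB : Set ℕ) (S : Finset ℕ) (t a : ℕ)
    (ha : a ∉ S) (ha0 : 0 < a)
    (hsum : S.sum id = t)
    (hsums : subsetSums ↑S = {x : ℕ | x ≤ t ∧ x ∉ BB ∧ ∀ β ∈ BB, x + β ≠ t})
    (HC : ∀ β ∈ BB, a ≤ β → β ≤ t + a →
      (∃ γ ∈ BB, γ + a = β) ∨ (∃ γ ∈ BB, β + γ = t + a))
    (CC0 : ∀ x, t < x → x < a → x ∈ BB ∧ ∃ γ ∈ BB, x + γ = t + a)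
    (CC1 : ∀ β ∈ BB, β ≤ t → t < a + β → (a + β ∈ BB ∨ ∃ γ ∈ BB, β + γ = t))
    (CC3 : ∀ β ∈ BB, ∀ β' ∈ BB, a + β + β' = t → (a + β ∈ BB ∨ a + β' ∈ BB)) :
    (insert a S).sum id = t + a ∧
    subsetSums ↑(insert a S) = {x : ℕ | x ≤ t + a ∧ x ∉ BB ∧ ∀ β ∈ BB, x + β ≠ t + a} := by
  constructor
  · rw [Finset.sum_insert ha, hsum]; simp [add_comm]
  rw [subsetSums_coe_insert a S ha, hsums]
  ext x
  simp only [Set.mem_union, Set.mem_image, Set.mem_setOf_eq]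
  constructor
  · rintro (⟨hx1, hx2, hx3⟩ | ⟨p, ⟨hp1, hp2, hp3⟩, rfl⟩)
    · refine ⟨by omega, hx2, ?_⟩
      intro β hβ hxβ
      rcases HC β hβ (by omega) (by omega) with ⟨γ, hγ, hγe⟩ | ⟨γ, hγ, hγe⟩
      · exact hx3 γ hγ (by omega)
      · have : γ = x := by omega
        exact hx2 (this ▸ hγ)
    · refine ⟨by omega, ?_, ?_⟩
      · intro hmem
        rcases HC _ hmem (by omega) (by omega) with ⟨γ, hγ, hγe⟩ | ⟨γ, hγ, hγe⟩
        · have : γ = p := by omega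
          exact hp2 (this ▸ hγ)
        · exact hp3 γ hγ (by omega)
      · intro β hβ hxβ
        exact hp3 β hβ (by omega)
  · rintro ⟨hx1, hx2, hx3⟩
    by_cases hcase1 : x ≤ t ∧ ∀ γ ∈ BB, x + γ ≠ t
    · exact Or.inl ⟨hcase1.1, hx2, hcase1.2⟩
    by_cases hcase2 : a ≤ x ∧ (x - a) ∉ BB
    · refine Or.inr ⟨x - a, ⟨by omega, hcase2.2, ?_⟩, by omega⟩
      intro γ hγ hγe
      exact hx3 γ hγ (by omega)
    -- contradictions
    exfalso
    push_neg at hcase1 hcase2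
    by_cases hxt : x ≤ t
    · obtain ⟨γ, hγ, hγe⟩ := hcase1 hxt
      by_cases hax : a ≤ x
      · have hmem : x - a ∈ BB := hcase2 hax
        -- case (iv): x = a + β', β' = x - a ∈ BB, x + γ = t
        rcases CC3 _ hmem γ hγ (by omega) with h | h
        · have : a + (x - a) = x := by omega
          exact hx2 (this ▸ h)
        · exact hx3 (a + γ) h (by omega)
      · -- case (iii): x < a, x + γ = t
        rcases CC1 γ hγ (by omega) (by omega) with h | ⟨γ', hγ', hγ'e⟩
        · exact hx3 (a + γ) h (by omega)
        · have : x = γ' := by omega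
          exact hx2 (this ▸ hγ')
    · by_cases hax : a ≤ x
      · have hmem : x - a ∈ BB := hcase2 hax
        -- case (ii)
        rcases CC1 _ hmem (by omega) (by omega) with h | ⟨γ, hγ, hγe⟩
        · have : a + (x - a) = x := by omega
          exact hx2 (this ▸ h)
        · exact hx3 γ hγ (by omega)
      · -- case (i): t < x < a
        exact hx2 (CC0 x (by omega) (by omega)).1




theorem stmt_0 (b : ℕ → ℕ)
    (hbmono : ∀ n, 1 ≤ n → b n < b (n + 1))
    (hb1 : 11 ≤ b 1)
    (hb2 : b 2 = 3 * b 1 + 5)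
    (hb3 : b 3 = 3 * b 2 + 2)
    (hrec : ∀ n, 3 ≤ n → b (n + 1) = 3 * b n + 4 * b (n - 1)) :
    ∃ a : ℕ → ℕ,
      (∀ n, 1 ≤ n → a n < a (n + 1)) ∧
      (∀ n, 1 ≤ n → 0 < a n) ∧
      subsetSums (a '' {n | 1 ≤ n}) = (b '' {n | 1 ≤ n})ᶜ := by
  set BB : Set ℕ := b '' {n | 1 ≤ n} with hBBdef
  -- basic helpers
  have hmemk : ∀ k, 1 ≤ k → b k ∈ BB := fun k hk => ⟨k, hk, rfl⟩
  have hmle : ∀ i, 1 ≤ i → ∀ j, i ≤ j → b i ≤ b j := by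
    intro i hi j hj
    induction j with
    | zero => omega
    | succ j ih =>
      rcases Nat.lt_or_ge i (j+1) with h | h
      · have h1 : i ≤ j := by omega
        exact le_trans (ih h1) (le_of_lt (hbmono j (by omega)))
      · have : i = j + 1 := by omega
        subst this
        omega
  have hgap : ∀ j, 1 ≤ j → 3 * b j + 2 ≤ b (j + 1) := by
    intro j hj
    match j, hj with
    | 1, _ => show 3 * b 1 + 2 ≤ b 2; omega
    | 2, _ => show 3 * b 2 + 2 ≤ b 3; omega
    | (k+3), _ =>
      show 3 * b (k+3) + 2 ≤ b (k+4)
      have h1 : b (k+4) = 3 * b (k+3) + 4 * b (k+2) := hrec (k+3) (by omega)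
      have h2 : b 1 ≤ b (k+2) := hmle 1 (by omega) (k+2) (by omega)
      omega
  have hb1le : ∀ β ∈ BB, b 1 ≤ β := by
    rintro β ⟨j, hj, rfl⟩
    exact hmle 1 (by omega) j hj
  have hpin_ge : ∀ β ∈ BB, ∀ k, 1 ≤ k → b k < β → b (k + 1) ≤ β := by
    rintro β ⟨j, hj, rfl⟩ k hk hlt
    have : ¬ (j ≤ k) := fun h => absurd (hmle j hj k h) (by omega)
    exact hmle (k+1) (by omega) j (by omega)
  have hpin_le : ∀ β ∈ BB, ∀ k, 1 ≤ k → β < b (k + 1) → β ≤ b k := by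
    rintro β ⟨j, hj, rfl⟩ k hk hlt
    have : ¬ (k + 1 ≤ j) := fun h => absurd (hmle (k+1) (by omega) j h) (by omega)
    exact hmle j hj k (by omega)
  have hpin_eq : ∀ β ∈ BB, ∀ k, 1 ≤ k → b k ≤ β → β < b (k + 1) → β = b k := by
    intro β hβ k hk h1 h2
    have := hpin_le β hβ k hk h2
    omega
  have hbub : ∀ j, 1 ≤ j → j + 10 ≤ b j := by
    intro j hj
    induction j with
    | zero => omega
    | succ j ih =>
      rcases Nat.eq_zero_or_pos j with rfl | hpos
      · exact hb1
      · have := hbmono j hpos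
        have := ih hpos
        omega
  -- initial block
  obtain ⟨S0, hS0b, hS0sum, hS0sums⟩ := block_lemma (b 1 - 1) (by omega)
  have hS0sums' : subsetSums ↑S0 =
      {x : ℕ | x ≤ b 1 - 1 ∧ x ∉ BB ∧ ∀ β ∈ BB, x + β ≠ b 1 - 1} := by
    rw [hS0sums]
    ext x
    simp only [Set.mem_Iic, Set.mem_setOf_eq]
    constructor
    · intro hx
      refine ⟨hx, fun hmem => ?_, fun β hβ he => ?_⟩
      · have := hb1le x hmem; omega
      · have := hb1le β hβ; omega
    · tauto
  -- step p0 : a = b 1 + 1, t : b 1 - 1 → 2 * b 1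
  have fresh0 : b 1 + 1 ∉ S0 := fun h => by have := hS0b _ h; omega
  obtain ⟨hsum1, hsums1⟩ := step_lemma BB S0 (b 1 - 1) (b 1 + 1) fresh0 (by omega) hS0sum hS0sums'
    (by -- HC
      intro β hβ h1 h2
      have hp : b 2 ≤ β := hpin_ge β hβ 1 (by omega) (by omega)
      omega)
    (by -- CC0
      intro x h1 h2
      have hx : x = b 1 := by omega
      subst hx
      exact ⟨hmemk 1 (by omega), b 1, hmemk 1 (by omega), by omega⟩)
    (by -- CC1
      intro β hβ h1 h2
      have := hb1le β hβ
      omega)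
    (by -- CC3
      intro β hβ β' hβ' he
      have := hb1le β hβ
      omega)
  rw [show b 1 - 1 + (b 1 + 1) = 2 * b 1 from by omega] at hsum1 hsums1
  -- step p1 : a = b 1 + 3, t : 2 b1 → 3 b1 + 3
  have fresh1 : b 1 + 3 ∉ insert (b 1 + 1) S0 := by
    intro h
    rcases Finset.mem_insert.mp h with h | h
    · omega
    · have := hS0b _ h; omega
  obtain ⟨hsum2, hsums2⟩ := step_lemma BB _ (2 * b 1) (b 1 + 3) fresh1 (by omega) hsum1 hsums1
    (by -- HC
      intro β hβ h1 h2
      have hp : b 2 ≤ β := hpin_ge β hβ 1 (by omega) (by omega)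
      omega)
    (by intro x h1 h2; omega)
    (by -- CC1: pin β = b 1
      intro β hβ h1 h2
      have hge := hb1le β hβ
      have heq := hpin_eq β hβ 1 (by omega) (by omega) (by show β < b 2; omega)
      exact Or.inr ⟨b 1, hmemk 1 (by omega), by omega⟩)
    (by -- CC3
      intro β hβ β' hβ' he
      have := hb1le β hβ
      have := hb1le β' hβ'
      omega)
  rw [show 2 * b 1 + (b 1 + 3) = 3 * b 1 + 3 from by omega] at hsum2 hsums2
  -- step p2 : a = b 1 + 2, t : 3 b1 + 3 → 4 b1 + 5
  have fresh2 : b 1 + 2 ∉ insert (b 1 + 3) (insert (b 1 + 1) S0) := by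
    intro h
    rcases Finset.mem_insert.mp h with h | h
    · omega
    rcases Finset.mem_insert.mp h with h | h
    · omega
    · have := hS0b _ h; omega
  obtain ⟨hsum3, hsums3⟩ := step_lemma BB _ (3 * b 1 + 3) (b 1 + 2) fresh2 (by omega) hsum2 hsums2
    (by -- HC : pin β = b 2
      intro β hβ h1 h2
      have hge : b 2 ≤ β := hpin_ge β hβ 1 (by omega) (by omega)
      have heq : β = b 2 := hpin_eq β hβ 2 (by omega) (by omega) (by show β < b 3; omega)
      exact Or.inr ⟨b 1, hmemk 1 (by omega), by omega⟩)
    (by intro x h1 h2; omega)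
    (by -- CC1 : vacuous via pin
      intro β hβ h1 h2
      have hge := hb1le β hβ
      have hp : b 2 ≤ β := hpin_ge β hβ 1 (by omega) (by omega)
      omega)
    (by -- CC3 : β = β' = b 1, contradiction
      intro β hβ β' hβ' he
      have h1 := hb1le β hβ
      have h2 := hb1le β' hβ'
      have e1 : β = b 1 := hpin_eq β hβ 1 (by omega) (by omega) (by show β < b 2; omega)
      have e2 : β' = b 1 := hpin_eq β' hβ' 1 (by omega) (by omega) (by show β' < b 2; omega)
      omega)
  rw [show 3 * b 1 + 3 + (b 1 + 2) = 4 * b 1 + 5 from by omega] at hsum3 hsums3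
  -- step q1 : a = 4 b1 + 6, t : 4 b1 + 5 → 8 b1 + 11
  have fresh3 : 4 * b 1 + 6 ∉ insert (b 1 + 2) (insert (b 1 + 3) (insert (b 1 + 1) S0)) := by
    intro h
    rcases Finset.mem_insert.mp h with h | h
    · omega
    rcases Finset.mem_insert.mp h with h | h
    · omega
    rcases Finset.mem_insert.mp h with h | h
    · omega
    · have := hS0b _ h; omega
  obtain ⟨hsum4, hsums4⟩ := step_lemma BB _ (4 * b 1 + 5) (4 * b 1 + 6) fresh3 (by omega) hsum3 hsums3
    (by -- HC : vacuous
      intro β hβ h1 h2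
      have hge : b 3 ≤ β := hpin_ge β hβ 2 (by omega) (by omega)
      omega)
    (by intro x h1 h2; omega)
    (by -- CC1 : β = b 1 or b 2
      intro β hβ h1 h2
      have hge := hb1le β hβ
      by_cases hc : β < b 2
      · have heq : β = b 1 := hpin_eq β hβ 1 (by omega) (by omega) (by show β < b 2; omega)
        exact Or.inr ⟨b 2, hmemk 2 (by omega), by omega⟩
      · have heq : β = b 2 := hpin_eq β hβ 2 (by omega) (by omega) (by show β < b 3; omega)
        exact Or.inr ⟨b 1, hmemk 1 (by omega), by omega⟩)
    (by -- CC3 : vacuous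
      intro β hβ β' hβ' he
      have := hb1le β hβ
      have := hb1le β' hβ'
      omega)
  rw [show 4 * b 1 + 5 + (4 * b 1 + 6) = 8 * b 1 + 11 from by omega] at hsum4 hsums4
  -- step q2 : a = 4 b1 + 11, t : 8 b1 + 11 → 12 b1 + 22 = b 3 + b 2
  have fresh4 : 4 * b 1 + 11 ∉ insert (4 * b 1 + 6)
      (insert (b 1 + 2) (insert (b 1 + 3) (insert (b 1 + 1) S0))) := by
    intro h
    rcases Finset.mem_insert.mp h with h | h
    · omega
    rcases Finset.mem_insert.mp h with h | h
    · omega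
    rcases Finset.mem_insert.mp h with h | h
    · omega
    rcases Finset.mem_insert.mp h with h | h
    · omega
    · have := hS0b _ h; omega
  obtain ⟨hsum5, hsums5⟩ := step_lemma BB _ (8 * b 1 + 11) (4 * b 1 + 11) fresh4 (by omega)
    hsum4 hsums4
    (by -- HC : pin β = b 3
      intro β hβ h1 h2
      have hg4 : 3 * b 3 + 2 ≤ b 4 := hgap 3 (by omega)
      have hge : b 3 ≤ β := hpin_ge β hβ 2 (by omega) (by omega)
      have heq : β = b 3 := hpin_eq β hβ 3 (by omega) (by omega) (by show β < b 4; omega)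
      exact Or.inr ⟨b 2, hmemk 2 (by omega), by omega⟩)
    (by intro x h1 h2; omega)
    (by -- CC1 : vacuous
      intro β hβ h1 h2
      have hge : b 3 ≤ β := hpin_ge β hβ 2 (by omega) (by omega)
      omega)
    (by -- CC3 : both = b 1, contradiction
      intro β hβ β' hβ' he
      have h1 := hb1le β hβ
      have h2 := hb1le β' hβ'
      have e1 : β ≤ b 1 := hpin_le β hβ 1 (by omega) (by show β < b 2; omega)
      have e2 : β' ≤ b 1 := hpin_le β' hβ' 1 (by omega) (by show β' < b 2; omega)
      omega)
  rw [show 8 * b 1 + 11 + (4 * b 1 + 11) = b 3 + b 2 from by omega] at hsum5 hsums5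
  set S5 : Finset ℕ := insert (4 * b 1 + 11) (insert (4 * b 1 + 6)
      (insert (b 1 + 2) (insert (b 1 + 3) (insert (b 1 + 1) S0)))) with hS5def
  have hS5b : ∀ x ∈ S5, 0 < x ∧ 2 * x ≤ b 3 + b 2 + 2 := by
    intro x hx
    rw [hS5def] at hx
    rcases Finset.mem_insert.mp hx with rfl | hx
    · omega
    rcases Finset.mem_insert.mp hx with rfl | hx
    · omega
    rcases Finset.mem_insert.mp hx with rfl | hx
    · omega
    rcases Finset.mem_insert.mp hx with rfl | hx
    · omega
    rcases Finset.mem_insert.mp hx with rfl | hx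
    · omega
    · have := hS0b _ hx; omega
  -- the ambient set A
  set A : Set ℕ := ↑S5 ∪ {y | ∃ m, 2 ≤ m ∧
      (y = b (m+1) + b m - b (m-1) ∨ y = b (m+1) + 2 * b m - b (m-1) ∨
       y = b (m+1) + 2 * b (m-1))} with hAdef

  have hS5mem : ↑S5 ⊆ A := by rw [hAdef]; exact Set.subset_union_left
  have master : ∀ n, 2 ≤ n → ∃ S : Finset ℕ,
      ↑S ⊆ A ∧ S5 ⊆ S ∧
      (∀ x ∈ S, 0 < x ∧ 2 * x ≤ b (n+1) + b n + 2) ∧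
      (∀ m, 2 ≤ m → m < n →
        (b (m+1) + b m - b (m-1)) ∈ S ∧ (b (m+1) + 2 * b m - b (m-1)) ∈ S ∧
        (b (m+1) + 2 * b (m-1)) ∈ S) ∧
      S.sum id = b (n+1) + b n ∧
      subsetSums ↑S = {x : ℕ | x ≤ b (n+1) + b n ∧ x ∉ BB ∧
        ∀ β ∈ BB, x + β ≠ b (n+1) + b n} := by
    intro n hn
    induction n, hn using Nat.le_induction with
    | base =>
      refine ⟨S5, hS5mem, Finset.Subset.refl _, ?_, ?_, ?_, ?_⟩
      · exact hS5b
      · intro m h1 h2; omega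
      · exact hsum5
      · exact hsums5
    | succ n hn ih =>
      obtain ⟨S, hSA, hS5S, hSb, hStrip, hSsum, hSsums⟩ := ih
      obtain ⟨k, rfl⟩ : ∃ k, n = k + 2 := ⟨n - 2, by omega⟩
      have g1 : b (k+1) < b (k+2) := hbmono (k+1) (by omega)
      have g2 : b (k+2) < b (k+3) := hbmono (k+2) (by omega)
      have g2' : b (k+3) < b (k+4) := hbmono (k+3) (by omega)
      have g3 : 3 * b (k+1) + 2 ≤ b (k+2) := hgap (k+1) (by omega)
      have g4 : 3 * b (k+2) + 2 ≤ b (k+3) := hgap (k+2) (by omega)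
      have g5 : 3 * b (k+3) + 2 ≤ b (k+4) := hgap (k+3) (by omega)
      have g6 : b (k+4) = 3 * b (k+3) + 4 * b (k+2) := hrec (k+3) (by omega)
      have g7 : 11 ≤ b (k+1) := by have := hmle 1 (by omega) (k+1) (by omega); omega
      have g8 : 3 * b (k+4) + 2 ≤ b (k+5) := hgap (k+4) (by omega)
      have hSsum' : S.sum id = b (k+3) + b (k+2) := hSsum
      have hSsums' : subsetSums ↑S = {x : ℕ | x ≤ b (k+3) + b (k+2) ∧ x ∉ BB ∧
          ∀ β ∈ BB, x + β ≠ b (k+3) + b (k+2)} := hSsums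
      have hSb' : ∀ x ∈ S, 0 < x ∧ 2 * x ≤ b (k+3) + b (k+2) + 2 := hSb
      -- MOVE A : a = b (k+3) + b (k+2) - b (k+1)
      have freshA : b (k+3) + b (k+2) - b (k+1) ∉ S := fun h => by
        have := hSb' _ h; omega
      obtain ⟨hsumA, hsumsA⟩ := step_lemma BB S (b (k+3) + b (k+2))
        (b (k+3) + b (k+2) - b (k+1)) freshA (by omega) hSsum' hSsums'
        (by -- HC vacuous
          intro β hβ h1 h2
          exfalso
          have hp : b (k+4) ≤ β := hpin_ge β hβ (k+3) (by omega) (by omega)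
          omega)
        (by intro x h1 h2; exfalso; omega)
        (by -- CC1 : β = b (k+2) or b (k+3)
          intro β hβ h1 h2
          have hp1 : b (k+2) ≤ β := hpin_ge β hβ (k+1) (by omega) (by omega)
          by_cases hc : β < b (k+3)
          · have he : β = b (k+2) := hpin_eq β hβ (k+2) (by omega) (by omega)
              (show β < b (k+3) from hc)
            exact Or.inr ⟨b (k+3), hmemk (k+3) (by omega), by omega⟩
          · have he : β = b (k+3) := hpin_eq β hβ (k+3) (by omega) (by omega)
              (show β < b (k+4) by omega)
            exact Or.inr ⟨b (k+2), hmemk (k+2) (by omega), by omega⟩)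
        (by -- CC3 : β + β' = b (k+1) impossible
          intro β hβ β' hβ' he
          exfalso
          have l1 := hb1le β hβ
          have l2 := hb1le β' hβ'
          rcases Nat.eq_zero_or_pos k with rfl | hk0
          · have e1 : b (0+1) = b 1 := rfl
            have e2 : b (0+2) = b 2 := rfl
            have e3 : b (0+3) = b 3 := rfl
            omega
          · have hlt : β < b (k+1) := by omega
            have hlt' : β' < b (k+1) := by omega
            have u1 : β ≤ b k := hpin_le β hβ k hk0 hlt
            have u2 : β' ≤ b k := hpin_le β' hβ' k hk0 hlt'
            have g := hgap k hk0
            omega)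
      rw [show b (k+3) + b (k+2) + (b (k+3) + b (k+2) - b (k+1)) =
        2 * b (k+3) + 2 * b (k+2) - b (k+1) from by omega] at hsumA hsumsA
      -- MOVE B : a = b (k+3) + 2 b (k+2) - b (k+1)
      have freshB : b (k+3) + 2 * b (k+2) - b (k+1) ∉
          insert (b (k+3) + b (k+2) - b (k+1)) S := by
        intro h
        rcases Finset.mem_insert.mp h with h | h
        · omega
        · have := hSb' _ h; omega
      obtain ⟨hsumB, hsumsB⟩ := step_lemma BB _ (2 * b (k+3) + 2 * b (k+2) - b (k+1))
        (b (k+3) + 2 * b (k+2) - b (k+1)) freshB (by omega) hsumA hsumsA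
        (by -- HC vacuous
          intro β hβ h1 h2
          exfalso
          have hp : b (k+4) ≤ β := hpin_ge β hβ (k+3) (by omega) (by omega)
          omega)
        (by intro x h1 h2; exfalso; omega)
        (by -- CC1 vacuous
          intro β hβ h1 h2
          exfalso
          have hp : b (k+4) ≤ β := hpin_ge β hβ (k+3) (by omega) (by omega)
          omega)
        (by -- CC3 : β + β' = b (k+3) impossible
          intro β hβ β' hβ' he
          exfalso
          have l1 := hb1le β hβ
          have l2 := hb1le β' hβ'
          have u1 : β ≤ b (k+2) := hpin_le β hβ (k+2) (by omega)
            (show β < b (k+3) by omega)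
          have u2 : β' ≤ b (k+2) := hpin_le β' hβ' (k+2) (by omega)
            (show β' < b (k+3) by omega)
          omega)
      rw [show 2 * b (k+3) + 2 * b (k+2) - b (k+1) + (b (k+3) + 2 * b (k+2) - b (k+1)) =
        3 * b (k+3) + 4 * b (k+2) - 2 * b (k+1) from by omega] at hsumB hsumsB
      -- MOVE C : a = b (k+3) + 2 b (k+1), inserts hole b (k+4)
      have freshC : b (k+3) + 2 * b (k+1) ∉
          insert (b (k+3) + 2 * b (k+2) - b (k+1))
            (insert (b (k+3) + b (k+2) - b (k+1)) S) := by
        intro h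
        rcases Finset.mem_insert.mp h with h | h
        · omega
        rcases Finset.mem_insert.mp h with h | h
        · omega
        · have := hSb' _ h; omega
      obtain ⟨hsumC, hsumsC⟩ := step_lemma BB _ (3 * b (k+3) + 4 * b (k+2) - 2 * b (k+1))
        (b (k+3) + 2 * b (k+1)) freshC (by omega) hsumB hsumsB
        (by -- HC : pin β = b (k+4)
          intro β hβ h1 h2
          have hp : b (k+4) ≤ β := hpin_ge β hβ (k+3) (by omega) (by omega)
          have he : β = b (k+4) := hpin_eq β hβ (k+4) (by omega) hp
            (show β < b (k+5) by omega)
          exact Or.inr ⟨b (k+3), hmemk (k+3) (by omega), by omega⟩)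
        (by intro x h1 h2; exfalso; omega)
        (by -- CC1 vacuous
          intro β hβ h1 h2
          exfalso
          have hp : b (k+4) ≤ β := hpin_ge β hβ (k+3) (by omega) (by omega)
          omega)
        (by -- CC3 impossible
          intro β hβ β' hβ' he
          exfalso
          have l1 := hb1le β hβ
          have l2 := hb1le β' hβ'
          have P : ∀ γ, γ ∈ BB → b (k+2) < γ → γ < b (k+4) → γ = b (k+3) := by
            intro γ hγ hlo hhi
            have hp : b (k+3) ≤ γ := hpin_ge γ hγ (k+2) (by omega) hlo
            exact hpin_eq γ hγ (k+3) (by omega) hp (show γ < b (k+4) from hhi)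
          rcases le_or_gt β (b (k+2)) with c1 | c1 <;>
            rcases le_or_gt β' (b (k+2)) with c2 | c2
          · omega
          · have := P β' hβ' c2 (by omega); omega
          · have := P β hβ c1 (by omega); omega
          · have h1 := P β hβ c1 (by omega)
            have h2 := P β' hβ' c2 (by omega)
            omega)
      rw [show 3 * b (k+3) + 4 * b (k+2) - 2 * b (k+1) + (b (k+3) + 2 * b (k+1)) =
        b (k+4) + b (k+3) from by omega] at hsumC hsumsC
      show ∃ S : Finset ℕ, ↑S ⊆ A ∧ S5 ⊆ S ∧
        (∀ x ∈ S, 0 < x ∧ 2 * x ≤ b (k+4) + b (k+3) + 2) ∧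
        (∀ m, 2 ≤ m → m < k + 3 →
          (b (m+1) + b m - b (m-1)) ∈ S ∧ (b (m+1) + 2 * b m - b (m-1)) ∈ S ∧
          (b (m+1) + 2 * b (m-1)) ∈ S) ∧
        S.sum id = b (k+4) + b (k+3) ∧
        subsetSums ↑S = {x : ℕ | x ≤ b (k+4) + b (k+3) ∧ x ∉ BB ∧
          ∀ β ∈ BB, x + β ≠ b (k+4) + b (k+3)}
      refine ⟨insert (b (k+3) + 2 * b (k+1))
        (insert (b (k+3) + 2 * b (k+2) - b (k+1))
          (insert (b (k+3) + b (k+2) - b (k+1)) S)), ?_, ?_, ?_, ?_, hsumC, hsumsC⟩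
      · intro y hy
        simp only [Finset.coe_insert, Set.mem_insert_iff, Finset.mem_coe] at hy
        rcases hy with rfl | rfl | rfl | hy
        · rw [hAdef]; right; exact ⟨k+2, by omega, Or.inr (Or.inr rfl)⟩
        · rw [hAdef]; right; exact ⟨k+2, by omega, Or.inr (Or.inl rfl)⟩
        · rw [hAdef]; right; exact ⟨k+2, by omega, Or.inl rfl⟩
        · exact hSA hy
      · exact hS5S.trans ((Finset.subset_insert _ _).trans
          ((Finset.subset_insert _ _).trans (Finset.subset_insert _ _)))
      · intro x hx
        rcases Finset.mem_insert.mp hx with rfl | hx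
        · omega
        rcases Finset.mem_insert.mp hx with rfl | hx
        · omega
        rcases Finset.mem_insert.mp hx with rfl | hx
        · omega
        · have := hSb' _ hx; omega
      · intro m hm2 hmlt
        by_cases hmn : m < k + 2
        · obtain ⟨u1, u2, u3⟩ := hStrip m hm2 hmn
          exact ⟨Finset.mem_insert_of_mem (Finset.mem_insert_of_mem
              (Finset.mem_insert_of_mem u1)),
            Finset.mem_insert_of_mem (Finset.mem_insert_of_mem
              (Finset.mem_insert_of_mem u2)),
            Finset.mem_insert_of_mem (Finset.mem_insert_of_mem
              (Finset.mem_insert_of_mem u3))⟩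
        · have hme : m = k + 2 := by omega
          subst hme
          refine ⟨?_, ?_, ?_⟩
          · exact Finset.mem_insert_of_mem (Finset.mem_insert_of_mem
              (Finset.mem_insert_self _ _))
          · exact Finset.mem_insert_of_mem (Finset.mem_insert_self _ _)
          · exact Finset.mem_insert_self _ _
  -- positivity of A
  have hApos : ∀ y ∈ A, 0 < y := by
    intro y hy
    rw [hAdef] at hy
    rcases hy with hy | ⟨m, hm, hy⟩
    · exact (hS5b y hy).1
    · obtain ⟨j, rfl⟩ : ∃ j, m = j + 2 := ⟨m - 2, by omega⟩
      have g1 : b (j+1) < b (j+2) := hbmono (j+1) (by omega)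
      have g2 : b (j+2) < b (j+3) := hbmono (j+2) (by omega)
      have g7 : 11 ≤ b (j+1) := by have := hmle 1 (by omega) (j+1) (by omega); omega
      rcases hy with rfl | rfl | rfl
      · show 0 < b (j+3) + b (j+2) - b (j+1); omega
      · show 0 < b (j+3) + 2 * b (j+2) - b (j+1); omega
      · show 0 < b (j+3) + 2 * b (j+1); omega
  -- A is infinite
  have hAinf : A.Infinite := by
    have hsm : StrictMono (fun j : ℕ => b (j+3) + 2 * b (j+1)) := by
      apply strictMono_nat_of_lt_succ
      intro j
      have h1 : b (j+3) < b (j+4) := hbmono (j+3) (by omega)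
      have h2 : b (j+1) < b (j+2) := hbmono (j+1) (by omega)
      show b (j+3) + 2 * b (j+1) < b (j+4) + 2 * b (j+2)
      omega
    apply Set.infinite_of_injective_forall_mem hsm.injective
    intro j
    rw [hAdef]
    right
    exact ⟨j+2, by omega, Or.inr (Or.inr rfl)⟩
  -- the main set equality
  have hmain : subsetSums A = BBᶜ := by
    apply Set.eq_of_subset_of_subset
    · rintro x ⟨F, hFA, rfl⟩
      intro hxBB
      obtain ⟨n, hn2, hnb⟩ : ∃ n, 2 ≤ n ∧ 2 * F.sum id + 2 < b n := by
        refine ⟨2 * F.sum id + 4, by omega, ?_⟩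
        have := hbub (2 * F.sum id + 4) (by omega); omega
      obtain ⟨S, hSA, hS5S, hSb, hStrip, hSsum, hSsums⟩ := master n hn2
      have hFS : F ⊆ S := by
        intro y hy
        have hyA : y ∈ A := hFA hy
        have hyx : y ≤ F.sum id := Finset.single_le_sum (f := id)
          (fun i _ => Nat.zero_le _) hy
        rw [hAdef] at hyA
        rcases hyA with h | ⟨m, hm, hp⟩
        · exact hS5S (Finset.mem_coe.mp h)
        · by_cases hmn : m < n
          · obtain ⟨u1, u2, u3⟩ := hStrip m hm hmn
            rcases hp with rfl | rfl | rfl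
            · exact u1
            · exact u2
            · exact u3
          · exfalso
            have h1 : b n ≤ b (m+1) := hmle n (by omega) (m+1) (by omega)
            obtain ⟨j, rfl⟩ : ∃ j, m = j + 2 := ⟨m - 2, by omega⟩
            have e1 : b (j+2-1) = b (j+1) := rfl
            have e2 : b (j+2+1) = b (j+3) := rfl
            have g1 : b (j+1) < b (j+2) := hbmono (j+1) (by omega)
            have g2 : b (j+2) < b (j+3) := hbmono (j+2) (by omega)
            rcases hp with rfl | rfl | rfl <;> omega
      have hx : F.sum id ∈ subsetSums ↑S := ⟨F, Finset.coe_subset.mpr hFS, rfl⟩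
      rw [hSsums] at hx
      exact hx.2.1 hxBB
    · intro x hx
      obtain ⟨n, hn2, hnb⟩ : ∃ n, 2 ≤ n ∧ x < b n :=
        ⟨x + 2, by omega, by have := hbub (x+2) (by omega); omega⟩
      obtain ⟨S, hSA, hS5S, hSb, hStrip, hSsum, hSsums⟩ := master n hn2
      have hxs : x ∈ subsetSums ↑S := by
        rw [hSsums]
        have hbn1 : b n < b (n+1) := hbmono n (by omega)
        refine ⟨by omega, hx, ?_⟩
        intro β hβ he
        have hp2 : b (n+2) ≤ β := hpin_ge β hβ (n+1) (by omega) (by omega)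
        have hg : 3 * b (n+1) + 2 ≤ b (n+2) := hgap (n+1) (by omega)
        omega
      exact subsetSums_mono hSA hxs
  -- conclusion
  refine ⟨fun n => Nat.nth (· ∈ A) (n - 1), ?_, ?_, ?_⟩
  · intro n hn
    exact (Nat.nth_lt_nth hAinf).mpr (by omega)
  · intro n hn
    exact hApos _ (Nat.nth_mem_of_infinite hAinf (n-1))
  · have himg : (fun n => Nat.nth (· ∈ A) (n - 1)) '' {n : ℕ | 1 ≤ n} = A := by
      apply Set.eq_of_subset_of_subset
      · rintro y ⟨n, hn, rfl⟩
        exact Nat.nth_mem_of_infinite hAinf (n-1)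
      · intro y hy
        have hr : y ∈ Set.range (Nat.nth (· ∈ A)) :=
          (Nat.range_nth_of_infinite hAinf).ge hy
        obtain ⟨k, hk⟩ := hr
        exact ⟨k+1, by show 1 ≤ k+1; omega, by exact hk⟩
    rw [himg, hmain]
end

section
/- Let B = {b_1 < b_2 < b_3 < …} be an infinite strictly increasing sequence of integers with b_1 ≥ 3 and b_2 = 3b_1 + 3. Then there is no infinite strictly increasing sequence A = {a_1 < a_2 < …} of positive integers such that P(A) = ℕ \ B (where B is identified with its set of values). -/
lemma sumid (s : Finset ℕ) : s.sum id = ∑ x ∈ s, x := rfl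

lemma mem_le_sum {H : Finset ℕ} {y : ℕ} (hy : y ∈ H) : y ≤ ∑ x ∈ H, x := by
  simpa using Finset.single_le_sum (f := id) (fun i _ => Nat.zero_le (id i)) hy

lemma keyL (N : ℕ) (hN : 1 ≤ N) (G : Finset ℕ) (hG : ∀ x ∈ G, 0 < x ∧ x < N)
    (hrep : ∀ m, m < N → ∃ H, H ⊆ G ∧ ∑ x ∈ H, x = m) :
    ∀ k (F : Finset ℕ), F ⊆ G → ∑ x ∈ F, x ≤ k → N ≤ ∑ x ∈ F, x →
      ∃ H, H ⊆ G ∧ ∑ x ∈ H, x = N := by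
  intro k
  induction k with
  | zero => intro F hFG hk hNF; omega
  | succ k ih =>
    intro F hFG hk hNF
    rcases eq_or_lt_of_le hNF with heq | hlt
    · exact ⟨F, hFG, heq.symm⟩
    · have hne : F.Nonempty := by
        rcases F.eq_empty_or_nonempty with h | h
        · rw [h] at hNF; simp at hNF; omega
        · exact h
      set x0 := F.min' hne with hx0
      have hx0F : x0 ∈ F := F.min'_mem hne
      have hx0pos : 0 < x0 := (hG x0 (hFG hx0F)).1
      have hx0lt : x0 < N := (hG x0 (hFG hx0F)).2
      have hsum_erase : ∑ x ∈ F.erase x0, x + x0 = ∑ x ∈ F, x := by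
        simpa using Finset.sum_erase_add F id hx0F
      by_cases hc : N ≤ ∑ x ∈ F.erase x0, x
      · exact ih (F.erase x0) ((F.erase_subset x0).trans hFG) (by omega) hc
      · push_neg at hc
        have hxle : x0 ≤ ∑ x ∈ F, x := mem_le_sum hx0F
        set v := N - (∑ x ∈ F, x - x0) with hv
        have hv1 : 1 ≤ v := by omega
        have hvlt : v < x0 := by omega
        obtain ⟨H, hHG, hHsum⟩ := hrep v (by omega)
        have hHlt : ∀ y ∈ H, y < x0 := by
          intro y hy
          have := mem_le_sum hy
          omega
        have hdisj : Disjoint (F.erase x0) H := by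
          rw [Finset.disjoint_right]
          intro y hyH hyF
          have h1 := hHlt y hyH
          have h2 : x0 ≤ y := F.min'_le y (Finset.mem_of_mem_erase hyF)
          omega
        refine ⟨(F.erase x0) ∪ H, ?_, ?_⟩
        · exact Finset.union_subset ((F.erase_subset x0).trans hFG) hHG
        · rw [Finset.sum_union hdisj, hHsum]
          omega

theorem stmt_1 (b : ℕ → ℕ)
    (hbmono : ∀ n, 1 ≤ n → b n < b (n + 1))
    (hb1 : 3 ≤ b 1)
    (hb2 : b 2 = 3 * b 1 + 3) :
    ¬ ∃ a : ℕ → ℕ,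
      (∀ n, 1 ≤ n → a n < a (n + 1)) ∧
      (∀ n, 1 ≤ n → 0 < a n) ∧
      subsetSums (a '' {n | 1 ≤ n}) = (b '' {n | 1 ≤ n})ᶜ := by
  rintro ⟨a, hamono, hapos, hPA⟩
  set A : Set ℕ := a '' {n | 1 ≤ n} with hA
  have hApos : ∀ x ∈ A, 0 < x := by
    rintro x ⟨n, hn, rfl⟩
    exact hapos n hn
  -- monotonicity of b on [1, ∞)
  have hble0 : ∀ n k, 1 ≤ n → b n ≤ b (n + k) := by
    intro n k hn
    induction k with
    | zero => simp
    | succ k ih =>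
      exact ih.trans (hbmono (n + k) (by omega)).le
  have hble : ∀ n m, 1 ≤ n → n ≤ m → b n ≤ b m := by
    intro n m h1 hnm
    obtain ⟨k, rfl⟩ := Nat.exists_eq_add_of_le hnm
    exact hble0 n k h1
  -- every m avoiding b-values below b 2 is a subset sum
  have hmem : ∀ m, b 1 ≠ m → m < b 2 →
      ∃ F : Finset ℕ, ↑F ⊆ A ∧ ∑ x ∈ F, x = m := by
    intro m h1 h2
    have hm : m ∈ (b '' {n | 1 ≤ n})ᶜ := by
      intro hmB
      obtain ⟨n, hn, hbn⟩ := hmB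
      simp only [Set.mem_setOf_eq] at hn
      rcases Nat.lt_or_ge n 2 with h | h
      · have : n = 1 := by omega
        rw [this] at hbn; exact h1 hbn
      · have := hble 2 n (by omega) h
        omega
    rw [← hPA] at hm
    obtain ⟨F, hFA, hFs⟩ := hm
    exact ⟨F, hFA, by rw [← sumid]; exact hFs⟩
  -- b i is never a subset sum
  have hnotP : ∀ i, 1 ≤ i →
      ¬ ∃ F : Finset ℕ, ↑F ⊆ A ∧ ∑ x ∈ F, x = b i := by
    intro i hi h
    obtain ⟨F, hFA, hFs⟩ := h
    have : b i ∈ subsetSums A := ⟨F, hFA, by rw [sumid]; exact hFs⟩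
    rw [hPA] at this
    exact this ⟨i, hi, rfl⟩
  -- any subset of A with all elements < b 1 has sum < b 1
  have hM : ∀ F : Finset ℕ, ↑F ⊆ A → (∀ x ∈ F, x < b 1) → ∑ x ∈ F, x < b 1 := by
    intro F hFA hFlt
    by_contra h
    push_neg at h
    have hrep' : ∀ m, ∃ H : Finset ℕ, ↑H ⊆ A ∧ (m < b 1 → ∑ x ∈ H, x = m) ∧
        (∀ x ∈ H, x ≤ m) := by
      intro m
      by_cases hm : m < b 1
      · obtain ⟨H, hHA, hHs⟩ := hmem m (by omega) (by omega)
        refine ⟨H, hHA, fun _ => hHs, fun x hx => ?_⟩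
        have := mem_le_sum hx
        omega
      · exact ⟨∅, by simp, fun h' => absurd h' hm, by simp⟩
    choose rep hrepA hrepsum hreple using hrep'
    set G : Finset ℕ := F ∪ (Finset.range (b 1)).biUnion rep with hGdef
    have hGA : ∀ x ∈ G, x ∈ A := by
      intro x hx
      rw [hGdef, Finset.mem_union] at hx
      rcases hx with hx | hx
      · exact hFA hx
      · rw [Finset.mem_biUnion] at hx
        obtain ⟨m, _, hxm⟩ := hx
        exact hrepA m hxm
    have hGprop : ∀ x ∈ G, 0 < x ∧ x < b 1 := by
      intro x hx
      refine ⟨hApos x (hGA x hx), ?_⟩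
      rw [hGdef, Finset.mem_union] at hx
      rcases hx with hx | hx
      · exact hFlt x hx
      · rw [Finset.mem_biUnion] at hx
        obtain ⟨m, hm, hxm⟩ := hx
        rw [Finset.mem_range] at hm
        have := hreple m x hxm
        omega
    have hrepG : ∀ m, m < b 1 → ∃ H, H ⊆ G ∧ ∑ x ∈ H, x = m := by
      intro m hm
      refine ⟨rep m, ?_, hrepsum m hm⟩
      refine (Finset.subset_biUnion_of_mem rep (Finset.mem_range.mpr hm)).trans ?_
      exact Finset.subset_union_right
    obtain ⟨H, hHG, hHs⟩ := keyL (b 1) (by omega) G hGprop hrepG (∑ x ∈ F, x) F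
      Finset.subset_union_left le_rfl h
    exact hnotP 1 le_rfl ⟨H, fun x hx => hGA x (hHG hx), hHs⟩
  have hb1nA : b 1 ∉ A := by
    intro h
    exact hnotP 1 le_rfl ⟨{b 1}, by simpa using h, by simp⟩
  -- b 1 + 1 ∈ A
  have hc : (b 1 + 1) ∈ A := by
    obtain ⟨F, hFA, hFs⟩ := hmem (b 1 + 1) (by omega) (by omega)
    by_contra hcn
    have hlt : ∀ x ∈ F, x < b 1 := by
      intro x hx
      have hxle := mem_le_sum hx
      have hx1 : x ≠ b 1 + 1 := fun h => hcn (h ▸ hFA hx)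
      have hx2 : x ≠ b 1 := fun h => hb1nA (h ▸ hFA hx)
      omega
    have := hM F hFA hlt
    omega
  -- find e ∈ A with b1+3 ≤ e ≤ 2b1+2
  have he : ∃ e, e ∈ A ∧ b 1 + 3 ≤ e ∧ e ≤ 2 * b 1 + 2 := by
    obtain ⟨F, hFA, hFs⟩ := hmem (2 * b 1 + 2) (by omega) (by omega)
    by_contra hno
    push_neg at hno
    have hub : ∀ x ∈ F, x ≤ 2 * b 1 + 2 := by
      intro x hx
      have := mem_le_sum hx
      omega
    have hsplit : ∑ x ∈ F.filter (fun x => b 1 < x), x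
        + ∑ x ∈ F.filter (fun x => ¬ b 1 < x), x = ∑ x ∈ F, x :=
      Finset.sum_filter_add_sum_filter_not F (fun x => b 1 < x) _
    have hsm : ∑ x ∈ F.filter (fun x => ¬ b 1 < x), x < b 1 := by
      apply hM
      · intro x hx
        rw [Finset.mem_coe, Finset.mem_filter] at hx
        exact hFA hx.1
      · intro x hx
        rw [Finset.mem_filter] at hx
        have hx2 : x ≠ b 1 := fun h => hb1nA (h ▸ hFA hx.1)
        omega
    set bigs := F.filter (fun x => b 1 < x) with hbigs
    have hbsub : bigs ⊆ {b 1 + 1, b 1 + 2} := by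
      intro x hx
      rw [hbigs, Finset.mem_filter] at hx
      have h1 := hub x hx.1
      have h2 := hno x (hFA hx.1)
      simp only [Finset.mem_insert, Finset.mem_singleton]
      omega
    have hbsum : ∑ x ∈ bigs, x ≥ b 1 + 3 := by omega
    have hpairsum : ∑ x ∈ ({b 1 + 1, b 1 + 2} : Finset ℕ), x = 2 * b 1 + 3 := by
      rw [Finset.sum_insert (by simp), Finset.sum_singleton]
      omega
    by_cases h1 : (b 1 + 1) ∈ bigs
    · by_cases h2 : (b 1 + 2) ∈ bigs
      · have heq : bigs = {b 1 + 1, b 1 + 2} := by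
          apply Finset.Subset.antisymm hbsub
          intro x hx
          simp only [Finset.mem_insert, Finset.mem_singleton] at hx
          rcases hx with rfl | rfl
          · exact h1
          · exact h2
        have hbe : ∑ x ∈ bigs, x = 2 * b 1 + 3 := by rw [heq]; exact hpairsum
        omega
      · have hsub1 : bigs ⊆ {b 1 + 1} := by
          intro x hx
          have := hbsub hx
          simp only [Finset.mem_insert, Finset.mem_singleton] at this ⊢
          rcases this with h | h
          · exact h
          · exact absurd (h ▸ hx) h2
        have hle : ∑ x ∈ bigs, x ≤ ∑ x ∈ ({b 1 + 1} : Finset ℕ), x :=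
          Finset.sum_le_sum_of_subset hsub1
        rw [Finset.sum_singleton] at hle
        omega
    · have hsub2 : bigs ⊆ {b 1 + 2} := by
        intro x hx
        have := hbsub hx
        simp only [Finset.mem_insert, Finset.mem_singleton] at this ⊢
        rcases this with h | h
        · exact absurd (h ▸ hx) h1
        · exact h
      have hle : ∑ x ∈ bigs, x ≤ ∑ x ∈ ({b 1 + 2} : Finset ℕ), x :=
        Finset.sum_le_sum_of_subset hsub2
      rw [Finset.sum_singleton] at hle
      omega
  obtain ⟨e, heA, he1, he2⟩ := he
  -- the remainder t
  set t := 2 * b 1 + 2 - e with ht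
  have htlt : t < b 1 := by omega
  obtain ⟨H, hHA, hHs⟩ := hmem t (by omega) (by omega)
  have hHlt : ∀ x ∈ H, x < b 1 := by
    intro x hx
    have := mem_le_sum hx
    omega
  have heH : e ∉ H := fun h => by have := hHlt e h; omega
  have hcH : (b 1 + 1) ∉ insert e H := by
    simp only [Finset.mem_insert]
    rintro (h | h)
    · omega
    · have := hHlt _ h; omega
  refine hnotP 2 (by omega) ⟨insert (b 1 + 1) (insert e H), ?_, ?_⟩
  · intro x hx
    simp only [Finset.coe_insert, Set.mem_insert_iff, Finset.mem_coe] at hx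
    rcases hx with rfl | rfl | hx
    · exact hc
    · exact heA
    · exact hHA hx
  · rw [Finset.sum_insert hcH, Finset.sum_insert heH, hHs]
    omega
end

section
/- Let b_1 and d be positive integers with b_1 ∈ {4, 7, 8} or b_1 ≥ 11, and b_1 + 2 ≤ d ≤ 2b_1 + 1. Let B = {b_1 + (i−1)d : i = 1, 2, 3, …} be the infinite arithmetic progression with first term b_1 and common difference d. Then there exists an infinite strictly increasing sequence A = {a_1 < a_2 < …} of positive integers such that P(A) = ℕ \ B. -/
lemma covers_of_decide (S : Finset ℕ) (n : ℕ)
    (h : ∀ m ∈ Finset.range (n+1), ∃ T ∈ S.powerset, T.sum id = m) :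
    ∀ m ≤ n, ∃ T ⊆ S, T.sum id = m := by
  intro m hm
  obtain ⟨T, hT, hs⟩ := h m (Finset.mem_range.2 (Nat.lt_succ_of_le hm))
  exact ⟨T, Finset.mem_powerset.1 hT, hs⟩

lemma complete_exists (n : ℕ) (h : n = 0 ∨ n = 1 ∨ n = 3 ∨ n = 6 ∨ n = 7 ∨ 10 ≤ n) :
    ∃ S : Finset ℕ, (∀ x ∈ S, 0 < x ∧ 2 * x ≤ n + 1) ∧ S.sum id = n ∧
      ∀ m ≤ n, ∃ T ⊆ S, T.sum id = m := by
  induction n using Nat.strong_induction_on with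
  | _ n ih =>
    by_cases hn : n ≤ 19
    · interval_cases n
      · exact ⟨∅, by decide, by decide, covers_of_decide _ _ (by decide)⟩
      · exact ⟨{1}, by decide, by decide, covers_of_decide _ _ (by decide)⟩
      · omega
      · exact ⟨{1,2}, by decide, by decide, covers_of_decide _ _ (by decide)⟩
      · omega
      · omega
      · exact ⟨{1,2,3}, by decide, by decide, covers_of_decide _ _ (by decide)⟩
      · exact ⟨{1,2,4}, by decide, by decide, covers_of_decide _ _ (by decide)⟩
      · omega
      · omega
      · exact ⟨{1,2,3,4}, by decide, by decide, covers_of_decide _ _ (by decide)⟩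
      · exact ⟨{1,2,3,5}, by decide, by decide, covers_of_decide _ _ (by decide)⟩
      · exact ⟨{1,2,3,6}, by decide, by decide, covers_of_decide _ _ (by decide)⟩
      · exact ⟨{1,2,3,7}, by decide, by decide, covers_of_decide _ _ (by decide)⟩
      · exact ⟨{1,2,4,7}, by decide, by decide, covers_of_decide _ _ (by decide)⟩
      · exact ⟨{1,2,4,8}, by decide, by decide, covers_of_decide _ _ (by decide)⟩
      · exact ⟨{1,2,3,4,6}, by decide, by decide, covers_of_decide _ _ (by decide)⟩
      · exact ⟨{1,2,3,4,7}, by decide, by decide, covers_of_decide _ _ (by decide)⟩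
      · exact ⟨{1,2,3,4,8}, by decide, by decide, covers_of_decide _ _ (by decide)⟩
      · exact ⟨{1,2,3,4,9}, by decide, by decide, covers_of_decide _ _ (by decide)⟩
    · push_neg at hn
      set t := (n+1)/2 with ht
      set m := n - t with hm
      obtain ⟨S, hb, hsum, hcov⟩ := ih m (by omega) (by omega)
      have htS : t ∉ S := fun hmem => by have := hb t hmem; omega
      refine ⟨insert t S, ?_, ?_, ?_⟩
      · intro x hx
        rcases Finset.mem_insert.1 hx with rfl | hx
        · omega
        · have := hb x hx; omega
      · rw [Finset.sum_insert htS, hsum]; simp only [id]; omega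
      · intro m' hm'
        by_cases hle : m' ≤ m
        · obtain ⟨T, hT, hTs⟩ := hcov m' hle
          exact ⟨T, hT.trans (Finset.subset_insert _ _), hTs⟩
        · have h1 : t ≤ m' := by omega
          obtain ⟨T, hT, hTs⟩ := hcov (m' - t) (by omega)
          have htT : t ∉ T := fun hmem => htS (hT hmem)
          refine ⟨insert t T, Finset.insert_subset_insert _ hT, ?_⟩
          rw [Finset.sum_insert htT, hTs]; simp only [id]; omega

theorem stmt_3 (b1 d : ℕ)
    (hb1pos : 0 < b1) (hdpos : 0 < d)
    (hb1 : b1 = 4 ∨ b1 = 7 ∨ b1 = 8 ∨ 11 ≤ b1)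
    (hd1 : b1 + 2 ≤ d) (hd2 : d ≤ 2 * b1 + 1) :
    ∃ a : ℕ → ℕ,
      (∀ n, 1 ≤ n → a n < a (n + 1)) ∧
      (∀ n, 1 ≤ n → 0 < a n) ∧
      subsetSums (a '' {n | 1 ≤ n}) =
        ((fun i => b1 + (i - 1) * d) '' {i | 1 ≤ i})ᶜ := by
  obtain ⟨S, hSb, hSsum, hScov⟩ := complete_exists (b1 - 1) (by omega)
  have hb1S : (b1 + 1) ∉ S := fun h => by have := hSb _ h; omega
  set F0 : Finset ℕ := insert (b1 + 1) S with hF0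
  have hF0sum : F0.sum id = 2 * b1 := by
    rw [hF0, Finset.sum_insert hb1S, hSsum]; simp only [id]; omega
  have hF0mem : ∀ x ∈ F0, 0 < x ∧ x ≤ b1 + 1 := by
    intro x hx
    rcases Finset.mem_insert.1 hx with rfl | hx
    · omega
    · have := hSb x hx; omega
  set A : Set ℕ := ↑F0 ∪ {x | ∃ k, 1 ≤ k ∧ x = k * d} with hA
  -- positivity of A
  have hApos : ∀ x ∈ A, 0 < x := by
    rintro x (hx | ⟨k, hk, rfl⟩)
    · exact (hF0mem x hx).1
    · positivity
  -- A is infinite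
  have hAinf : A.Infinite := by
    apply Set.infinite_of_injective_forall_mem (f := fun k : ℕ => (k + 1) * d)
      (fun a b hab => by
        have : (a + 1) * d = (b + 1) * d := hab
        have := Nat.eq_of_mul_eq_mul_right hdpos this
        omega)
    intro k
    exact Or.inr ⟨k + 1, by omega, rfl⟩
  -- subset sums of F0 avoid b1 and are ≤ 2 b1
  have hF0sub : ∀ T ⊆ F0, T.sum id ≤ 2 * b1 ∧ T.sum id ≠ b1 := by
    intro T hT
    have hle : T.sum id ≤ 2 * b1 := hF0sum ▸ Finset.sum_le_sum_of_subset hT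
    refine ⟨hle, ?_⟩
    by_cases hmem : (b1 + 1) ∈ T
    · have : b1 + 1 ≤ T.sum id :=
        Finset.single_le_sum (f := id) (fun i _ => Nat.zero_le i) hmem
      omega
    · have hTS : T ⊆ S := fun x hx => by
        rcases Finset.mem_insert.1 (hT hx) with rfl | h
        · exact absurd hx hmem
        · exact h
      have : T.sum id ≤ b1 - 1 := hSsum ▸ Finset.sum_le_sum_of_subset hTS
      omega
  -- key1 : sums of subsets of A are never b1 + k d
  have key1 : ∀ F : Finset ℕ, ↑F ⊆ A → ∀ k, F.sum id ≠ b1 + k * d := by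
    intro F hF k heq
    have hsplit : (F ∩ F0).sum id + (F \ F0).sum id = F.sum id :=
      Finset.sum_inter_add_sum_sdiff F F0 id
    obtain ⟨hs1le, hs1ne⟩ := hF0sub (F ∩ F0) (Finset.inter_subset_right)
    have hdvd : d ∣ (F \ F0).sum id := by
      apply Finset.dvd_sum
      intro x hx
      have hxF : x ∈ F := (Finset.mem_sdiff.1 hx).1
      have hxnF0 : x ∉ F0 := (Finset.mem_sdiff.1 hx).2
      rcases hF hxF with h | ⟨j, hj, rfl⟩
      · exact absurd h hxnF0
      · exact ⟨j, by simp [mul_comm]⟩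
    obtain ⟨q, hq⟩ := hdvd
    set s1 := (F ∩ F0).sum id with hs1
    have heq2 : s1 + d * q = b1 + k * d := by omega
    have hmod : s1 % d = b1 % d := by
      have := congrArg (· % d) heq2
      simpa [Nat.add_mul_mod_self_left, Nat.add_mul_mod_self_right] using this
    have hb1lt : b1 % d = b1 := Nat.mod_eq_of_lt (by omega)
    have hdm := Nat.div_add_mod s1 d
    set q' := s1 / d with hq'
    have hq'le : q' ≤ 1 := by
      by_contra hcon
      push_neg at hcon
      have : 2 * d ≤ d * q' := by
        calc 2 * d = d * 2 := by ring
        _ ≤ d * q' := Nat.mul_le_mul_left d hcon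
      omega
    interval_cases q' <;> omega
  -- key2 : every x avoiding b1 + k d is a subset sum of A
  have key2 : ∀ x : ℕ, (∀ k, x ≠ b1 + k * d) → ∃ F : Finset ℕ, ↑F ⊆ A ∧ F.sum id = x := by
    have main : ∀ K : ℕ, ∀ x, x ≤ 2 * b1 + d * (Finset.range (K + 1)).sum id →
        (∀ k, x ≠ b1 + k * d) →
        ∃ F : Finset ℕ,
          (↑F ⊆ (↑F0 : Set ℕ) ∪ {y | ∃ k, 1 ≤ k ∧ k ≤ K ∧ y = k * d}) ∧ F.sum id = x := by
      intro K
      induction K with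
      | zero =>
        intro x hx havoid
        have hx0 : x ≤ 2 * b1 := by
          have : d * (Finset.range (0 + 1)).sum id = 0 := by simp
          omega
        have hxne : x ≠ b1 := by have := havoid 0; omega
        by_cases hxle : x ≤ b1 - 1
        · obtain ⟨T, hT, hTs⟩ := hScov x hxle
          refine ⟨T, ?_, hTs⟩
          intro y hy
          exact Or.inl (Finset.mem_insert_of_mem (hT hy))
        · have hxge : b1 + 1 ≤ x := by omega
          obtain ⟨T, hT, hTs⟩ := hScov (x - (b1 + 1)) (by omega)
          clear hx
          have hnT : (b1 + 1) ∉ T := fun h => hb1S (hT h)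
          refine ⟨insert (b1 + 1) T, ?_, ?_⟩
          · intro y hy
            rcases Finset.mem_insert.1 hy with rfl | hyT
            · exact Or.inl (Finset.mem_insert_self _ _)
            · exact Or.inl (Finset.mem_insert_of_mem (hT hyT))
          · rw [Finset.sum_insert hnT, hTs]; simp only [id]; omega
      | succ K ih =>
        intro x hx havoid
        set s : ℕ := (Finset.range (K + 1)).sum id with hsdef
        have hKle : K ≤ s :=
          Finset.single_le_sum (f := id) (fun i _ => Nat.zero_le i)
            (Finset.self_mem_range_succ K)
        have hx' : x ≤ 2 * b1 + d * s + (K + 1) * d := by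
          have h2 : (Finset.range (K + 2)).sum id = s + (K + 1) :=
            Finset.sum_range_succ id (K + 1)
          calc x ≤ 2 * b1 + d * (Finset.range (K + 2)).sum id := hx
          _ = 2 * b1 + d * s + (K + 1) * d := by rw [h2]; ring
        by_cases hcase : x ≤ 2 * b1 + d * s
        · obtain ⟨F, hFsub, hFsum⟩ := ih x hcase havoid
          refine ⟨F, ?_, hFsum⟩
          intro y hy
          rcases hFsub hy with h | ⟨j, hj1, hj2, rfl⟩
          · exact Or.inl h
          · exact Or.inr ⟨j, hj1, by omega, rfl⟩
        · push_neg at hcase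
          have hdK : d * K ≤ d * s := Nat.mul_le_mul_left d hKle
          have hle : (K + 1) * d ≤ x := by
            have hKd : (K + 1) * d = d * K + d := by ring
            omega
          set y := x - (K + 1) * d with hy
          have hxy : x = y + (K + 1) * d := by omega
          have hybd : y ≤ 2 * b1 + d * s := by omega
          have hyavoid : ∀ k, y ≠ b1 + k * d := by
            intro k hk
            apply havoid (k + K + 1)
            rw [hxy, hk]; ring
          obtain ⟨F, hFsub, hFsum⟩ := ih y hybd hyavoid
          have hnotF : (K + 1) * d ∉ F := by
            intro hmem
            rcases hFsub hmem with h | ⟨j, hj1, hj2, hj3⟩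
            · have := hF0mem _ h
              have : d ≤ (K + 1) * d := Nat.le_mul_of_pos_left d (by omega)
              omega
            · have h1 : j * d ≤ K * d := Nat.mul_le_mul_right d hj2
              have h2 : K * d + d = (K + 1) * d := by ring
              omega
          refine ⟨insert ((K + 1) * d) F, ?_, ?_⟩
          · intro z hz
            rcases Finset.mem_insert.1 hz with rfl | hzF
            · exact Or.inr ⟨K + 1, by omega, by omega, rfl⟩
            · rcases hFsub hzF with h | ⟨j, hj1, hj2, rfl⟩
              · exact Or.inl h
              · exact Or.inr ⟨j, hj1, by omega, rfl⟩
          · rw [Finset.sum_insert hnotF, hFsum]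
            simp only [id]
            omega
    intro x havoid
    have hxK : x ≤ 2 * b1 + d * (Finset.range (x + 1)).sum id := by
      have h1 : x ≤ (Finset.range (x + 1)).sum id :=
        Finset.single_le_sum (f := id) (fun i _ => Nat.zero_le i)
          (Finset.self_mem_range_succ x)
      have h2 : (Finset.range (x + 1)).sum id ≤ d * (Finset.range (x + 1)).sum id :=
        Nat.le_mul_of_pos_left _ hdpos
      omega
    obtain ⟨F, hFsub, hFsum⟩ := main x x hxK havoid
    refine ⟨F, ?_, hFsum⟩
    intro y hy
    rcases hFsub hy with h | ⟨j, hj1, hj2, rfl⟩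
    · exact Or.inl h
    · exact Or.inr ⟨j, hj1, rfl⟩
  -- the B-set description
  have hBeq : ((fun i => b1 + (i - 1) * d) '' {i | 1 ≤ i}) = {x | ∃ k, x = b1 + k * d} := by
    ext x
    constructor
    · rintro ⟨i, hi, rfl⟩
      exact ⟨i - 1, rfl⟩
    · rintro ⟨k, rfl⟩
      exact ⟨k + 1, by simp, by simp⟩
  -- the sequence
  refine ⟨fun n => Nat.nth (· ∈ A) (n - 1), ?_, ?_, ?_⟩
  · intro n hn
    have := (Nat.nth_lt_nth (p := (· ∈ A)) hAinf (k := n - 1) (n := n)).2 (by omega)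
    simpa using this
  · intro n hn
    exact hApos _ (Nat.nth_mem_of_infinite (p := (· ∈ A)) hAinf (n - 1))
  · have himg : (fun n => Nat.nth (· ∈ A) (n - 1)) '' {n | 1 ≤ n} = A := by
      ext x
      constructor
      · rintro ⟨n, hn, rfl⟩
        exact Nat.nth_mem_of_infinite (p := (· ∈ A)) hAinf (n - 1)
      · intro hx
        have : x ∈ Set.range (Nat.nth (· ∈ A)) := by
          rw [Nat.range_nth_of_infinite (p := (· ∈ A)) hAinf]
          exact hx
        obtain ⟨m, hm⟩ := this
        exact ⟨m + 1, by simp, by simpa using hm⟩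
    rw [himg, hBeq]
    ext x
    simp only [subsetSums, Set.mem_setOf_eq, Set.mem_compl_iff]
    constructor
    · rintro ⟨F, hF, rfl⟩
      rintro ⟨k, hk⟩
      exact key1 F hF k hk
    · intro hx
      apply key2
      intro k hk
      exact hx ⟨k, hk⟩
end

section
/- Let B = {b_1 < b_2 < b_3 < …} be an infinite strictly increasing sequence of integers with b_1 ≥ 11, b_2 = 3b_1 + 5, b_3 = 3b_2 + 2, and b_{n+1} = 3b_n + 4b_{n-1} for all n ≥ 3. Then there exists a sequence of finite sets of positive integers A_4 ⊆ A_5 ⊆ A_6 ⊆ … such that for every k ≥ 4: (i) A_{k+1} = A_k ∪ {b_k + 2b_{k−2}, b_k + b_{k−1} − b_{k−2}, b_k + 2b_{k−1} − b_{k−2}}; and (ii) P(A_k) = [0, b_k + b_{k−1}] \ ({b_1, …, b_k} ∪ {b_k + b_{k−1} − b_i : i = 1, …, k−2}). -/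
lemma subsetSums_insert (e : ℕ) (S : Finset ℕ) (he : e ∉ S) :
    subsetSums ↑(insert e S) = subsetSums ↑S ∪ (fun y => e + y) '' subsetSums ↑S := by
  ext n
  constructor
  · rintro ⟨F, hFsub, rfl⟩
    by_cases heF : e ∈ F
    · right
      refine ⟨(F.erase e).sum id, ⟨F.erase e, ?_, rfl⟩, ?_⟩
      · intro x hx
        have hx' : x ∈ F.erase e := Finset.mem_coe.mp hx
        have hne := Finset.ne_of_mem_erase hx'
        have hxF := Finset.mem_of_mem_erase hx'
        have := hFsub (Finset.mem_coe.mpr hxF)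
        simp only [Finset.coe_insert, Set.mem_insert_iff, Finset.mem_coe] at this
        rcases this with rfl | h
        · exact absurd rfl hne
        · exact Finset.mem_coe.mpr h
      · have := Finset.add_sum_erase F id heF
        simpa using this
    · left
      refine ⟨F, ?_, rfl⟩
      intro x hx
      have := hFsub hx
      simp only [Finset.coe_insert, Set.mem_insert_iff] at this
      rcases this with rfl | h
      · exact absurd (Finset.mem_coe.mp hx) heF
      · exact h
  · rintro (⟨F, hF, rfl⟩ | ⟨y, ⟨F, hF, rfl⟩, rfl⟩)
    · refine ⟨F, ?_, rfl⟩
      refine hF.trans ?_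
      simp
    · have heF : e ∉ F := fun h => he (Finset.mem_coe.mp (hF (Finset.mem_coe.mpr h)))
      refine ⟨insert e F, ?_, ?_⟩
      · intro x hx
        simp only [Finset.coe_insert, Set.mem_insert_iff, Finset.mem_coe] at hx ⊢
        rcases hx with rfl | h
        · exact Or.inl rfl
        · exact Or.inr (Finset.mem_coe.mp (hF (Finset.mem_coe.mpr h)))
      · simp [Finset.sum_insert heF]

lemma image_add_setOf (e : ℕ) (Φ : ℕ → Prop) :
    (fun y => e + y) '' {y | Φ y} = {x | e ≤ x ∧ Φ (x - e)} := by
  ext x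
  constructor
  · rintro ⟨y, hy, rfl⟩
    exact ⟨Nat.le_add_right _ _, by simpa using hy⟩
  · rintro ⟨h1, h2⟩
    exact ⟨x - e, h2, by show e + (x - e) = x; omega⟩

lemma subsetSums_coe (L : Finset ℕ) :
    subsetSums ↑L = ↑(L.powerset.image fun F => F.sum id) := by
  ext n
  simp only [subsetSums, Set.mem_setOf_eq, Finset.coe_image, Set.mem_image, Finset.mem_coe,
    Finset.mem_powerset]
  constructor
  · rintro ⟨F, h1, h2⟩
    exact ⟨F, Finset.coe_subset.mp h1, h2⟩
  · rintro ⟨F, h1, h2⟩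
    exact ⟨F, Finset.coe_subset.mpr h1, h2⟩

lemma subsetSums_explicit (L : Finset ℕ) (s : ℕ)
    (h : L.powerset.image (fun F => F.sum id) = Finset.range (s+1)) :
    subsetSums ↑L = {x : ℕ | x ≤ s} := by
  rw [subsetSums_coe, h]
  ext x; simp [Nat.lt_succ_iff]

lemma exists_L : ∀ s : ℕ, 10 ≤ s →
    ∃ L : Finset ℕ, (∀ x ∈ L, 0 < x ∧ 2 * x ≤ s + 1) ∧ L.sum id = s ∧
      subsetSums ↑L = {x : ℕ | x ≤ s} := by
  intro s
  induction s using Nat.strong_induction_on with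
  | _ s ih =>
    intro hs
    by_cases h20 : s ≤ 20
    · interval_cases s
      · exact ⟨{1,2,3,4}, by decide, by decide, subsetSums_explicit _ _ (by decide)⟩
      · exact ⟨{1,2,3,5}, by decide, by decide, subsetSums_explicit _ _ (by decide)⟩
      · exact ⟨{1,2,4,5}, by decide, by decide, subsetSums_explicit _ _ (by decide)⟩
      · exact ⟨{1,2,4,6}, by decide, by decide, subsetSums_explicit _ _ (by decide)⟩
      · exact ⟨{1,2,4,7}, by decide, by decide, subsetSums_explicit _ _ (by decide)⟩
      · exact ⟨{1,2,3,4,5}, by decide, by decide, subsetSums_explicit _ _ (by decide)⟩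
      · exact ⟨{1,2,3,4,6}, by decide, by decide, subsetSums_explicit _ _ (by decide)⟩
      · exact ⟨{1,2,3,4,7}, by decide, by decide, subsetSums_explicit _ _ (by decide)⟩
      · exact ⟨{1,2,3,4,8}, by decide, by decide, subsetSums_explicit _ _ (by decide)⟩
      · exact ⟨{1,2,3,4,9}, by decide, by decide, subsetSums_explicit _ _ (by decide)⟩
      · exact ⟨{1,2,3,4,10}, by decide, by decide, subsetSums_explicit _ _ (by decide)⟩
    · obtain ⟨L', hm, hsum, hP⟩ := ih (s / 2) (by omega) (by omega)
      have hq2 : s / 2 ≤ s ∧ s ≤ 2 * (s / 2) + 1 ∧ 2 * (s - s / 2) ≤ s + 1 := by omega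
      have hnot : s - s / 2 ∉ L' := by
        intro h
        have := hm _ h
        omega
      refine ⟨insert (s - s / 2) L', ?_, ?_, ?_⟩
      · intro x hx
        rcases Finset.mem_insert.mp hx with rfl | hx
        · omega
        · have := hm x hx; omega
      · rw [Finset.sum_insert hnot, hsum]
        show (s - s / 2) + s / 2 = s
        omega
      · rw [subsetSums_insert _ _ hnot, hP, image_add_setOf]
        ext x
        simp only [Set.mem_union, Set.mem_setOf_eq]
        omega

/-- The recursively defined sequence of finite sets. -/
def Aseq (b : ℕ → ℕ) (base : Finset ℕ) : ℕ → Finset ℕ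
  | 0 => base
  | n + 1 => if n < 4 then base else
      Aseq b base n ∪ {b n + 2 * b (n - 2), b n + b (n - 1) - b (n - 2),
        b n + 2 * b (n - 1) - b (n - 2)}

/-- The key inductive step: adjoining the three new elements transforms the
subset-sum set as required. -/
lemma key_step (b : ℕ → ℕ) (m : ℕ) (A4 : Finset ℕ)
    (hu : b (m+4) = 3 * b (m+3) + 4 * b (m+2))
    (hb5 : b (m+5) = 3 * b (m+4) + 4 * b (m+3))
    (hv3 : 3 * b (m+2) + 2 ≤ b (m+3))
    (hwv : b (m+2) < b (m+3))
    (hvu : b (m+3) < b (m+4))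
    (hwpos : 11 ≤ b (m+2))
    (hbu : ∀ j, 1 ≤ j → j ≤ m+4 → b j ≤ b (m+4))
    (hbv : ∀ j, 1 ≤ j → j ≤ m+3 → b j ≤ b (m+3))
    (hbw : ∀ j, 1 ≤ j → j ≤ m+2 → b j ≤ b (m+2))
    (hbpos : ∀ j, 1 ≤ j → 11 ≤ b j)
    (hFA : ∀ i j, 1 ≤ i → i ≤ m+4 → 1 ≤ j → j ≤ m+2 →
      b i + b j + 2 * b (m+2) ≠ b (m+3))
    (hA4mem : ∀ x ∈ A4, 0 < x ∧ x < b (m+4))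
    (ihP : subsetSums ↑A4 = {x : ℕ | x ≤ b (m+4) + b (m+3) ∧
      ¬((∃ j, 1 ≤ j ∧ j ≤ m+4 ∧ x = b j) ∨
        (∃ j, 1 ≤ j ∧ j ≤ m+2 ∧ x + b j = b (m+4) + b (m+3)))}) :
    subsetSums ↑(insert (b (m+4) + 2 * b (m+3) - b (m+2))
        (insert (b (m+4) + b (m+3) - b (m+2))
          (insert (b (m+4) + 2 * b (m+2)) A4))) =
      {x : ℕ | x ≤ b (m+5) + b (m+4) ∧
        ¬((∃ j, 1 ≤ j ∧ j ≤ m+5 ∧ x = b j) ∨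
          (∃ j, 1 ≤ j ∧ j ≤ m+3 ∧ x + b j = b (m+5) + b (m+4)))} := by
  have hc1A : b (m+4) + 2 * b (m+2) ∉ A4 := by
    intro h; have := hA4mem _ h; omega
  have hc2A : b (m+4) + b (m+3) - b (m+2) ∉ insert (b (m+4) + 2 * b (m+2)) A4 := by
    intro h
    rcases Finset.mem_insert.mp h with h | h
    · omega
    · have := hA4mem _ h; omega
  have hc3A : b (m+4) + 2 * b (m+3) - b (m+2) ∉
      insert (b (m+4) + b (m+3) - b (m+2)) (insert (b (m+4) + 2 * b (m+2)) A4) := by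
    intro h
    rcases Finset.mem_insert.mp h with h | h
    · omega
    · rcases Finset.mem_insert.mp h with h | h
      · omega
      · have := hA4mem _ h; omega
  -- Step 1 : insert b k + 2 b (k-2)
  have hQ1 : subsetSums ↑(insert (b (m+4) + 2 * b (m+2)) A4) =
      {x : ℕ | x ≤ 2 * b (m+4) + b (m+3) + 2 * b (m+2) ∧
        ¬((∃ j, 1 ≤ j ∧ j ≤ m+4 ∧ x = b j) ∨
          x = b (m+4) + b (m+3) + 2 * b (m+2) ∨
          x = 2 * b (m+4) + 2 * b (m+2) ∨
          (∃ j, 1 ≤ j ∧ j ≤ m+2 ∧ x + b j = 2 * b (m+4) + b (m+3) + 2 * b (m+2)))} := by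
    rw [subsetSums_insert _ _ hc1A, ihP, image_add_setOf]
    ext x
    simp only [Set.mem_union, Set.mem_setOf_eq]
    constructor
    · rintro (⟨hx, hH⟩ | ⟨hcx, hyle, hyH⟩)
      · refine ⟨by omega, ?_⟩
        rintro (hB | h | h | ⟨j, hj1, hj2, hj⟩)
        · exact hH (Or.inl hB)
        · omega
        · omega
        · have := hbw j hj1 hj2
          exact hH (Or.inr ⟨j, hj1, hj2, by omega⟩)
      · refine ⟨by omega, ?_⟩
        rintro (⟨j, hj1, hj2, hxj⟩ | h | h | ⟨j, hj1, hj2, hxj⟩)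
        · have := hbu j hj1 hj2; omega
        · exact hyH (Or.inl ⟨m+3, by omega, by omega, by omega⟩)
        · exact hyH (Or.inl ⟨m+4, by omega, by omega, by omega⟩)
        · exact hyH (Or.inr ⟨j, hj1, hj2, by omega⟩)
    · rintro ⟨hx, hH⟩
      by_cases h0 : x ≤ b (m+4) + b (m+3)
      · by_cases hB : ∃ j, 1 ≤ j ∧ j ≤ m+4 ∧ x = b j
        · exact absurd (Or.inl hB) hH
        · by_cases hG : ∃ j, 1 ≤ j ∧ j ≤ m+2 ∧ x + b j = b (m+4) + b (m+3)
          · obtain ⟨j, hj1, hj2, hj⟩ := hG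
            have hbwj := hbw j hj1 hj2
            right
            refine ⟨by omega, by omega, ?_⟩
            rintro (⟨i, hi1, hi2, hi⟩ | ⟨i, hi1, hi2, hi⟩)
            · exact hFA i j hi1 hi2 hj1 hj2 (by omega)
            · have := hbw i hi1 hi2
              omega
          · left
            refine ⟨h0, ?_⟩
            rintro (h | h)
            exacts [hB h, hG h]
      · right
        refine ⟨by omega, by omega, ?_⟩
        rintro (⟨i, hi1, hi2, hi⟩ | ⟨i, hi1, hi2, hi⟩)
        · have : i ≤ m+2 ∨ i = m+3 ∨ i = m+4 := by omega
          rcases this with h' | rfl | rfl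
          · have := hbw i hi1 h'; omega
          · exact hH (Or.inr (Or.inl (by omega)))
          · exact hH (Or.inr (Or.inr (Or.inl (by omega))))
        · have : i ≤ m+2 ∨ i = m+3 ∨ i = m+4 := by omega
          rcases this with h' | rfl | rfl
          · exact hH (Or.inr (Or.inr (Or.inr ⟨i, hi1, h', by omega⟩)))
          · exact hH (Or.inr (Or.inr (Or.inl (by omega))))
          · exact hH (Or.inr (Or.inl (by omega)))
  -- Step 2 : insert b k + b (k-1) - b (k-2)
  have hQ2 : subsetSums ↑(insert (b (m+4) + b (m+3) - b (m+2))
      (insert (b (m+4) + 2 * b (m+2)) A4)) =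
      {x : ℕ | x ≤ 3 * b (m+4) + 2 * b (m+3) + b (m+2) ∧
        ¬((∃ j, 1 ≤ j ∧ j ≤ m+4 ∧ x = b j) ∨
          (∃ j, 1 ≤ j ∧ j ≤ m+4 ∧ x + b j = 3 * b (m+4) + 2 * b (m+3) + b (m+2)))} := by
    rw [subsetSums_insert _ _ hc2A, hQ1, image_add_setOf]
    ext x
    simp only [Set.mem_union, Set.mem_setOf_eq]
    constructor
    · rintro (⟨hx, hH⟩ | ⟨hcx, hyle, hyH⟩)
      · refine ⟨by omega, ?_⟩
        rintro (hB | ⟨j, hj1, hj2, hj⟩)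
        · exact hH (Or.inl hB)
        · have := hbu j hj1 hj2; omega
      · refine ⟨by omega, ?_⟩
        rintro (⟨j, hj1, hj2, hxj⟩ | ⟨j, hj1, hj2, hj⟩)
        · have := hbu j hj1 hj2; omega
        · have : j ≤ m+2 ∨ j = m+3 ∨ j = m+4 := by omega
          rcases this with h' | rfl | rfl
          · exact hyH (Or.inr (Or.inr (Or.inr ⟨j, hj1, h', by omega⟩)))
          · exact hyH (Or.inr (Or.inr (Or.inl (by omega))))
          · exact hyH (Or.inr (Or.inl (by omega)))
    · rintro ⟨hx, hH⟩
      by_cases h0 : x ≤ 2 * b (m+4) + b (m+3) + 2 * b (m+2)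
      · by_cases hB : ∃ j, 1 ≤ j ∧ j ≤ m+4 ∧ x = b j
        · exact absurd (Or.inl hB) hH
        · by_cases hh1 : x = b (m+4) + b (m+3) + 2 * b (m+2)
          · right
            refine ⟨by omega, by omega, ?_⟩
            rintro (⟨i, hi1, hi2, hi⟩ | h | h | ⟨i, hi1, hi2, hi⟩)
            · have : i ≤ m+2 ∨ i = m+3 ∨ i = m+4 := by omega
              rcases this with h' | rfl | rfl
              · have := hbw i hi1 h'; omega
              · omega
              · omega
            · omega
            · omega
            · have := hbw i hi1 hi2; omega
          · by_cases hh2 : x = 2 * b (m+4) + 2 * b (m+2)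
            · right
              refine ⟨by omega, by omega, ?_⟩
              rintro (⟨i, hi1, hi2, hi⟩ | h | h | ⟨i, hi1, hi2, hi⟩)
              · have : i ≤ m+3 ∨ i = m+4 := by omega
                rcases this with h' | rfl
                · have := hbv i hi1 h'; omega
                · omega
              · omega
              · omega
              · have := hbw i hi1 hi2; omega
            · by_cases hG1 : ∃ j, 1 ≤ j ∧ j ≤ m+2 ∧
                  x + b j = 2 * b (m+4) + b (m+3) + 2 * b (m+2)
              · obtain ⟨j, hj1, hj2, hj⟩ := hG1
                have hbwj := hbw j hj1 hj2
                have hbjpos := hbpos j hj1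
                right
                refine ⟨by omega, by omega, ?_⟩
                rintro (⟨i, hi1, hi2, hi⟩ | h | h | ⟨i, hi1, hi2, hi⟩)
                · have := hbu i hi1 hi2; omega
                · omega
                · omega
                · have := hbw i hi1 hi2; omega
              · left
                refine ⟨h0, ?_⟩
                rintro (h | h | h | h)
                exacts [hB h, hh1 h, hh2 h, hG1 h]
      · right
        refine ⟨by omega, by omega, ?_⟩
        rintro (⟨i, hi1, hi2, hi⟩ | h | h | ⟨i, hi1, hi2, hi⟩)
        · have := hbu i hi1 hi2; omega
        · exact hH (Or.inr ⟨m+4, by omega, by omega, by omega⟩)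
        · exact hH (Or.inr ⟨m+3, by omega, by omega, by omega⟩)
        · exact hH (Or.inr ⟨i, hi1, by omega, by omega⟩)
  -- Step 3 : insert b k + 2 b (k-1) - b (k-2)
  rw [subsetSums_insert _ _ hc3A, hQ2, image_add_setOf]
  ext x
  simp only [Set.mem_union, Set.mem_setOf_eq]
  constructor
  · rintro (⟨hx, hH⟩ | ⟨hcx, hyle, hyH⟩)
    · refine ⟨by omega, ?_⟩
      rintro (⟨j, hj1, hj2, hj⟩ | ⟨j, hj1, hj2, hj⟩)
      · have : j ≤ m+4 ∨ j = m+5 := by omega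
        rcases this with h' | rfl
        · exact hH (Or.inl ⟨j, hj1, h', hj⟩)
        · omega
      · have := hbv j hj1 hj2; omega
    · refine ⟨by omega, ?_⟩
      rintro (⟨j, hj1, hj2, hj⟩ | ⟨j, hj1, hj2, hj⟩)
      · have : j ≤ m+4 ∨ j = m+5 := by omega
        rcases this with h' | rfl
        · have := hbu j hj1 h'; omega
        · exact hyH (Or.inr ⟨m+4, by omega, by omega, by omega⟩)
      · exact hyH (Or.inr ⟨j, hj1, by omega, by omega⟩)
  · rintro ⟨hx, hH⟩
    by_cases h0 : x ≤ 3 * b (m+4) + 2 * b (m+3) + b (m+2)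
    · by_cases hB : ∃ j, 1 ≤ j ∧ j ≤ m+4 ∧ x = b j
      · obtain ⟨j, hj1, hj2, rfl⟩ := hB
        exact absurd (Or.inl ⟨j, hj1, by omega, rfl⟩) hH
      · by_cases hG : ∃ j, 1 ≤ j ∧ j ≤ m+4 ∧
            x + b j = 3 * b (m+4) + 2 * b (m+3) + b (m+2)
        · obtain ⟨j, hj1, hj2, hj⟩ := hG
          have hbuj := hbu j hj1 hj2
          right
          refine ⟨by omega, by omega, ?_⟩
          rintro (⟨i, hi1, hi2, hi⟩ | ⟨i, hi1, hi2, hi⟩)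
          · have := hbu i hi1 hi2; omega
          · have := hbu i hi1 hi2; omega
        · left
          refine ⟨h0, ?_⟩
          rintro (h | h)
          exacts [hB h, hG h]
    · right
      refine ⟨by omega, by omega, ?_⟩
      rintro (⟨i, hi1, hi2, hi⟩ | ⟨i, hi1, hi2, hi⟩)
      · have := hbu i hi1 hi2; omega
      · have : i ≤ m+3 ∨ i = m+4 := by omega
        rcases this with h' | rfl
        · exact hH (Or.inr ⟨i, hi1, h', by omega⟩)
        · exact hH (Or.inl ⟨m+5, by omega, by omega, by omega⟩)

theorem stmt_5 (b : ℕ → ℕ)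
    (hbmono : ∀ n, 1 ≤ n → b n < b (n + 1))
    (hb1 : 11 ≤ b 1)
    (hb2 : b 2 = 3 * b 1 + 5)
    (hb3 : b 3 = 3 * b 2 + 2)
    (hrec : ∀ n, 3 ≤ n → b (n + 1) = 3 * b n + 4 * b (n - 1)) :
    ∃ A : ℕ → Finset ℕ,
      (∀ k, 4 ≤ k → A k ⊆ A (k + 1)) ∧
      (∀ k, 4 ≤ k → ∀ x ∈ A k, 0 < x) ∧
      (∀ k, 4 ≤ k →
        A (k + 1) = A k ∪
          {b k + 2 * b (k - 2), b k + b (k - 1) - b (k - 2),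
           b k + 2 * b (k - 1) - b (k - 2)}) ∧
      (∀ k, 4 ≤ k →
        subsetSums (↑(A k)) =
          Set.Icc 0 (b k + b (k - 1)) \
            (b '' Set.Icc 1 k ∪
              (fun i => b k + b (k - 1) - b i) '' Set.Icc 1 (k - 2))) := by
  -- Basic facts about the sequence b
  have hmono : ∀ i j, 1 ≤ i → i ≤ j → b i ≤ b j := by
    intro i j h1 h2
    induction j with
    | zero => omega
    | succ j ih =>
      rcases Nat.lt_or_ge i (j+1) with h | h
      · have hj : 1 ≤ j := by omega
        exact le_trans (ih (by omega)) (le_of_lt (hbmono j hj))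
      · have : i = j + 1 := by omega
        subst this; rfl
  have hlt : ∀ i j, 1 ≤ i → i < j → b i < b j := by
    intro i j h1 h2
    have := hbmono i h1
    have := hmono (i+1) j (by omega) (by omega)
    omega
  have hpos : ∀ n, 1 ≤ n → 11 ≤ b n := fun n hn => le_trans hb1 (hmono 1 n le_rfl hn)
  have hrec' : ∀ p : ℕ, b (p + 4) = 3 * b (p + 3) + 4 * b (p + 2) := by
    intro p
    have := hrec (p + 3) (by omega)
    have e1 : p + 3 + 1 = p + 4 := rfl
    have e2 : p + 3 - 1 = p + 2 := rfl
    rw [e1, e2] at this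
    exact this
  have hstep3 : ∀ n, 1 ≤ n → 3 * b n + 2 ≤ b (n + 1) := by
    intro n hn
    match n with
    | 1 => show 3 * b 1 + 2 ≤ b 2; omega
    | 2 => show 3 * b 2 + 2 ≤ b 3; omega
    | (m+3) =>
      show 3 * b (m+3) + 2 ≤ b (m+4)
      have := hrec' m
      have h2 := hpos (m+2) (by omega)
      omega
  have hALT : ∀ p : ℕ,
      b (p+3) + (3 * b 1 + 3) = 4 * b (p+2) ∨ b (p+3) = 4 * b (p+2) + (3 * b 1 + 3) := by
    intro p
    induction p with
    | zero =>
      show b 3 + (3 * b 1 + 3) = 4 * b 2 ∨ b 3 = 4 * b 2 + (3 * b 1 + 3)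
      left; omega
    | succ p ih =>
      have hr := hrec' p
      have e1 : p + 1 + 3 = p + 4 := rfl
      have e2 : p + 1 + 2 = p + 3 := rfl
      rw [e1, e2]
      rcases ih with h1 | h1
      · right; omega
      · left; omega
  have hFA : ∀ m : ℕ, ∀ i j, 1 ≤ i → i ≤ m+4 → 1 ≤ j → j ≤ m+2 →
      b i + b j + 2 * b (m+2) ≠ b (m+3) := by
    intro m i j hi1 hi2 hj1 hj2
    rcases Nat.lt_or_ge i (m+3) with hi | hi
    · rcases Nat.eq_zero_or_pos m with rfl | hm
      · have e2 : (0:ℕ)+2 = 2 := rfl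
        have e3 : (0:ℕ)+3 = 3 := rfl
        rw [e2, e3]
        have h2 : i ≤ 2 := by omega
        interval_cases i <;> interval_cases j <;> omega
      · have hr : b (m+3) = 3 * b (m+2) + 4 * b (m+1) := by
          obtain ⟨p, rfl⟩ : ∃ p, m = p + 1 := ⟨m - 1, by omega⟩
          exact hrec' p
        have hbi : b i ≤ b (m+2) := hmono i (m+2) hi1 (by omega)
        have hbj : b j ≤ b (m+2) := hmono j (m+2) hj1 hj2
        rcases Nat.lt_or_ge i (m+2) with hi' | hi'
        · rcases Nat.lt_or_ge j (m+2) with hj' | hj'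
          · have h1 : b i ≤ b (m+1) := hmono i (m+1) hi1 (by omega)
            have h2 : b j ≤ b (m+1) := hmono j (m+1) hj1 (by omega)
            have h3 : b (m+1) ≤ b (m+2) := hmono (m+1) (m+2) (by omega) (by omega)
            have h4 := hpos (m+1) (by omega)
            omega
          · have hj'' : j = m+2 := by omega
            subst hj''
            have h1 : b i ≤ b (m+1) := hmono i (m+1) hi1 (by omega)
            have h4 := hpos (m+1) (by omega)
            omega
        · have hi'' : i = m+2 := by omega
          subst hi''
          rcases Nat.lt_or_ge j (m+2) with hj' | hj'
          · have h2 : b j ≤ b (m+1) := hmono j (m+1) hj1 (by omega)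
            have h4 := hpos (m+1) (by omega)
            omega
          · have hj'' : j = m+2 := by omega
            subst hj''
            have halt : b (m+2) + (3 * b 1 + 3) = 4 * b (m+1) ∨
                b (m+2) = 4 * b (m+1) + (3 * b 1 + 3) := by
              have := hALT (m-1)
              rw [show m - 1 + 3 = m + 2 from by omega,
                show m - 1 + 2 = m + 1 from by omega] at this
              exact this
            omega
    · have h1 : b (m+3) ≤ b i := hmono (m+3) i (by omega) hi
      have h2 := hpos j hj1
      have h3 := hpos (m+2) (by omega)
      omega
  have hb4 : b 4 = 3 * b 3 + 4 * b 2 := hrec' 0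
  have hb3' : b 3 = 9 * b 1 + 17 := by omega
  have hb4' : b 4 = 39 * b 1 + 71 := by omega
  -- Construct the base set A₄
  obtain ⟨L, hLmem, hLsum, hLP⟩ := exists_L (b 1 - 1) (by omega)
  have hLsmall : ∀ x ∈ L, 0 < x ∧ 2 * x ≤ b 1 := by
    intro x hx; have := hLmem x hx; omega
  have hLP' : subsetSums ↑L = {x : ℕ | x ≤ b 1 - 1} := hLP
  set S1 : Finset ℕ := insert (b 1 + 1) L with hS1
  set S2 : Finset ℕ := insert (b 1 + 2) S1 with hS2
  set S3 : Finset ℕ := insert (b 1 + 3) S2 with hS3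
  set S4 : Finset ℕ := insert (4 * b 1 + 6) S3 with hS4
  set S5 : Finset ℕ := insert (4 * b 1 + 11) S4 with hS5
  set S6 : Finset ℕ := insert (8 * b 1 + 17) S5 with hS6
  set S7 : Finset ℕ := insert (11 * b 1 + 22) S6 with hS7
  set S8 : Finset ℕ := insert (17 * b 1 + 27) S7 with hS8
  have mem1 : ∀ x ∈ S1, 0 < x ∧ (2 * x ≤ b 1 ∨ x = b 1 + 1) := by
    intro x hx; rcases Finset.mem_insert.mp hx with rfl | hx
    · omega
    · have := hLsmall x hx; omega
  have mem2 : ∀ x ∈ S2, 0 < x ∧ (2 * x ≤ b 1 ∨ x = b 1 + 1 ∨ x = b 1 + 2) := by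
    intro x hx; rcases Finset.mem_insert.mp hx with rfl | hx
    · omega
    · have := mem1 x hx; omega
  have mem3 : ∀ x ∈ S3, 0 < x ∧ (2 * x ≤ b 1 ∨ x = b 1 + 1 ∨ x = b 1 + 2 ∨ x = b 1 + 3) := by
    intro x hx; rcases Finset.mem_insert.mp hx with rfl | hx
    · omega
    · have := mem2 x hx; omega
  have mem4 : ∀ x ∈ S4, 0 < x ∧ x ≤ 4 * b 1 + 6 := by
    intro x hx; rcases Finset.mem_insert.mp hx with rfl | hx
    · omega
    · have := mem3 x hx; omega
  have mem5 : ∀ x ∈ S5, 0 < x ∧ x ≤ 4 * b 1 + 11 := by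
    intro x hx; rcases Finset.mem_insert.mp hx with rfl | hx
    · omega
    · have := mem4 x hx; omega
  have mem6 : ∀ x ∈ S6, 0 < x ∧ x ≤ 8 * b 1 + 17 := by
    intro x hx; rcases Finset.mem_insert.mp hx with rfl | hx
    · omega
    · have := mem5 x hx; omega
  have mem7 : ∀ x ∈ S7, 0 < x ∧ x ≤ 11 * b 1 + 22 := by
    intro x hx; rcases Finset.mem_insert.mp hx with rfl | hx
    · omega
    · have := mem6 x hx; omega
  have mem8 : ∀ x ∈ S8, 0 < x ∧ x ≤ 17 * b 1 + 27 := by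
    intro x hx; rcases Finset.mem_insert.mp hx with rfl | hx
    · omega
    · have := mem7 x hx; omega
  have hP1 : subsetSums ↑S1 = {x : ℕ | x ≤ 2 * b 1 ∧ x ≠ b 1} := by
    rw [hS1, subsetSums_insert _ _ (fun h => by have := hLsmall _ h; omega), hLP',
      image_add_setOf]
    ext x; simp only [Set.mem_union, Set.mem_setOf_eq]; omega
  have hP2 : subsetSums ↑S2 = {x : ℕ | x ≤ 3 * b 1 + 2 ∧ x ≠ b 1 ∧ x ≠ 2 * b 1 + 2} := by
    rw [hS2, subsetSums_insert _ _ (fun h => by have := mem1 _ h; omega), hP1,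
      image_add_setOf]
    ext x; simp only [Set.mem_union, Set.mem_setOf_eq]; omega
  have hP3 : subsetSums ↑S3 = {x : ℕ | x ≤ 4 * b 1 + 5 ∧ x ≠ b 1 ∧ x ≠ 3 * b 1 + 5} := by
    rw [hS3, subsetSums_insert _ _ (fun h => by have := mem2 _ h; omega), hP2,
      image_add_setOf]
    ext x; simp only [Set.mem_union, Set.mem_setOf_eq]; omega
  have hP4 : subsetSums ↑S4 = {x : ℕ | x ≤ 8 * b 1 + 11 ∧ x ≠ b 1 ∧ x ≠ 3 * b 1 + 5 ∧
      x ≠ 5 * b 1 + 6 ∧ x ≠ 7 * b 1 + 11} := by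
    rw [hS4, subsetSums_insert _ _ (fun h => by have := mem3 _ h; omega), hP3,
      image_add_setOf]
    ext x; simp only [Set.mem_union, Set.mem_setOf_eq]; omega
  have hP5 : subsetSums ↑S5 = {x : ℕ | x ≤ 12 * b 1 + 22 ∧ x ≠ b 1 ∧ x ≠ 3 * b 1 + 5 ∧
      x ≠ 9 * b 1 + 17 ∧ x ≠ 11 * b 1 + 22} := by
    rw [hS5, subsetSums_insert _ _ (fun h => by have := mem4 _ h; omega), hP4,
      image_add_setOf]
    ext x; simp only [Set.mem_union, Set.mem_setOf_eq]; omega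
  have hP6 : subsetSums ↑S6 = {x : ℕ | x ≤ 20 * b 1 + 39 ∧ x ≠ b 1 ∧ x ≠ 3 * b 1 + 5 ∧
      x ≠ 9 * b 1 + 17 ∧ x ≠ 11 * b 1 + 22 ∧ x ≠ 17 * b 1 + 34 ∧ x ≠ 19 * b 1 + 39} := by
    rw [hS6, subsetSums_insert _ _ (fun h => by have := mem5 _ h; omega), hP5,
      image_add_setOf]
    ext x; simp only [Set.mem_union, Set.mem_setOf_eq]; omega
  have hP7 : subsetSums ↑S7 = {x : ℕ | x ≤ 31 * b 1 + 61 ∧ x ≠ b 1 ∧ x ≠ 3 * b 1 + 5 ∧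
      x ≠ 9 * b 1 + 17 ∧ x ≠ 22 * b 1 + 44 ∧ x ≠ 28 * b 1 + 56 ∧ x ≠ 30 * b 1 + 61} := by
    rw [hS7, subsetSums_insert _ _ (fun h => by have := mem6 _ h; omega), hP6,
      image_add_setOf]
    ext x; simp only [Set.mem_union, Set.mem_setOf_eq]; omega
  have hP8 : subsetSums ↑S8 = {x : ℕ | x ≤ 48 * b 1 + 88 ∧ x ≠ b 1 ∧ x ≠ 3 * b 1 + 5 ∧
      x ≠ 9 * b 1 + 17 ∧ x ≠ 39 * b 1 + 71 ∧ x ≠ 45 * b 1 + 83 ∧ x ≠ 47 * b 1 + 88} := by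
    rw [hS8, subsetSums_insert _ _ (fun h => by have := mem7 _ h; omega), hP7,
      image_add_setOf]
    ext x; simp only [Set.mem_union, Set.mem_setOf_eq]; omega
  -- The main induction
  have hA44 : Aseq b S8 4 = S8 := by
    show Aseq b S8 (3+1) = S8
    rw [Aseq, if_pos (by omega)]
  have main : ∀ m : ℕ, (∀ x ∈ Aseq b S8 (m+4), 0 < x ∧ x < b (m+4)) ∧
      subsetSums ↑(Aseq b S8 (m+4)) = {x : ℕ | x ≤ b (m+4) + b (m+3) ∧
        ¬((∃ j, 1 ≤ j ∧ j ≤ m+4 ∧ x = b j) ∨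
          (∃ j, 1 ≤ j ∧ j ≤ m+2 ∧ x + b j = b (m+4) + b (m+3)))} := by
    intro m
    induction m with
    | zero =>
      constructor
      · intro x hx
        rw [show (0:ℕ)+4 = 4 from rfl, hA44] at hx
        have := mem8 x hx
        show 0 < x ∧ x < b 4
        omega
      · rw [show (0:ℕ)+4 = 4 from rfl, show (0:ℕ)+3 = 3 from rfl,
          show (0:ℕ)+2 = 2 from rfl, hA44, hP8]
        ext x
        simp only [Set.mem_setOf_eq]
        constructor
        · rintro ⟨hx, h1, h2, h3, h4, h5, h6⟩
          refine ⟨by omega, ?_⟩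
          rintro (⟨j, hj1, hj2, hj⟩ | ⟨j, hj1, hj2, hj⟩)
          · interval_cases j <;> omega
          · interval_cases j <;> omega
        · rintro ⟨hx, hH⟩
          refine ⟨by omega, ?_, ?_, ?_, ?_, ?_, ?_⟩
          · intro h; exact hH (Or.inl ⟨1, by omega, by omega, by omega⟩)
          · intro h; exact hH (Or.inl ⟨2, by omega, by omega, by omega⟩)
          · intro h; exact hH (Or.inl ⟨3, by omega, by omega, by omega⟩)
          · intro h; exact hH (Or.inl ⟨4, by omega, by omega, by omega⟩)
          · intro h; exact hH (Or.inr ⟨2, by omega, by omega, by omega⟩)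
          · intro h; exact hH (Or.inr ⟨1, by omega, by omega, by omega⟩)
    | succ m ih =>
      obtain ⟨ihmem, ihP⟩ := ih
      have hu : b (m+4) = 3 * b (m+3) + 4 * b (m+2) := hrec' m
      have hb5 : b (m+5) = 3 * b (m+4) + 4 * b (m+3) := hrec' (m+1)
      have hv3 : 3 * b (m+2) + 2 ≤ b (m+3) := hstep3 (m+2) (by omega)
      have hwv : b (m+2) < b (m+3) := hlt (m+2) (m+3) (by omega) (by omega)
      have hvu : b (m+3) < b (m+4) := hlt (m+3) (m+4) (by omega) (by omega)
      have hub5 : b (m+4) < b (m+5) := hlt (m+4) (m+5) (by omega) (by omega)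
      have hwpos : 11 ≤ b (m+2) := hpos (m+2) (by omega)
      have hbu : ∀ j, 1 ≤ j → j ≤ m+4 → b j ≤ b (m+4) := fun j h1 h2 => hmono j (m+4) h1 h2
      have hbv : ∀ j, 1 ≤ j → j ≤ m+3 → b j ≤ b (m+3) := fun j h1 h2 => hmono j (m+3) h1 h2
      have hbw : ∀ j, 1 ≤ j → j ≤ m+2 → b j ≤ b (m+2) := fun j h1 h2 => hmono j (m+2) h1 h2
      have hA5 : Aseq b S8 (m+1+4) =
          insert (b (m+4) + 2 * b (m+3) - b (m+2))
            (insert (b (m+4) + b (m+3) - b (m+2))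
              (insert (b (m+4) + 2 * b (m+2)) (Aseq b S8 (m+4)))) := by
        show Aseq b S8 (m+4+1) = _
        rw [Aseq, if_neg (by omega)]
        show Aseq b S8 (m+4) ∪ {b (m+4) + 2 * b (m+2), b (m+4) + b (m+3) - b (m+2),
          b (m+4) + 2 * b (m+3) - b (m+2)} = _
        ext a
        simp only [Finset.mem_union, Finset.mem_insert, Finset.mem_singleton]
        tauto
      constructor
      · intro x hx
        rw [hA5] at hx
        show 0 < x ∧ x < b (m+5)
        rcases Finset.mem_insert.mp hx with rfl | hx
        · omega
        · rcases Finset.mem_insert.mp hx with rfl | hx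
          · omega
          · rcases Finset.mem_insert.mp hx with rfl | hx
            · omega
            · have := ihmem x hx
              omega
      · rw [hA5]
        exact key_step b m (Aseq b S8 (m+4)) hu hb5 hv3 hwv hvu hwpos hbu hbv hbw
          hpos (hFA m) ihmem ihP
  -- Conclusion
  refine ⟨Aseq b S8, ?_, ?_, ?_, ?_⟩
  · intro k hk
    obtain ⟨m, rfl⟩ : ∃ m, k = m + 4 := ⟨k - 4, by omega⟩
    show Aseq b S8 (m+4) ⊆ Aseq b S8 (m+4+1)
    conv_rhs => rw [Aseq]
    rw [if_neg (by omega)]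
    exact Finset.subset_union_left
  · intro k hk x hx
    obtain ⟨m, rfl⟩ : ∃ m, k = m + 4 := ⟨k - 4, by omega⟩
    exact ((main m).1 x hx).1
  · intro k hk
    obtain ⟨m, rfl⟩ : ∃ m, k = m + 4 := ⟨k - 4, by omega⟩
    show Aseq b S8 (m+4+1) = _
    rw [Aseq, if_neg (by omega)]
  · intro k hk
    obtain ⟨m, rfl⟩ : ∃ m, k = m + 4 := ⟨k - 4, by omega⟩
    rw [(main m).2]
    have e1 : m + 4 - 1 = m + 3 := rfl
    have e2 : m + 4 - 2 = m + 2 := rfl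
    rw [e1, e2]
    ext x
    simp only [Set.mem_setOf_eq, Set.mem_diff, Set.mem_Icc, Set.mem_union, Set.mem_image]
    constructor
    · rintro ⟨hx, hH⟩
      refine ⟨⟨Nat.zero_le x, hx⟩, ?_⟩
      rintro (⟨j, hj, rfl⟩ | ⟨j, hj, hj2⟩)
      · rcases Set.mem_Icc.mp hj with ⟨h1, h2⟩
        exact hH (Or.inl ⟨j, h1, h2, rfl⟩)
      · rcases Set.mem_Icc.mp hj with ⟨h1, h2⟩
        have hbj : b j ≤ b (m+4) := hmono j (m+4) h1 (by omega)
        exact hH (Or.inr ⟨j, h1, h2, by omega⟩)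
    · rintro ⟨⟨-, hx⟩, hH⟩
      refine ⟨hx, ?_⟩
      rintro (⟨j, hj1, hj2, rfl⟩ | ⟨j, hj1, hj2, hj⟩)
      · exact hH (Or.inl ⟨j, Set.mem_Icc.mpr ⟨hj1, hj2⟩, rfl⟩)
      · have hbj : b j ≤ b (m+4) := hmono j (m+4) hj1 (by omega)
        exact hH (Or.inr ⟨j, Set.mem_Icc.mpr ⟨hj1, hj2⟩, by omega⟩)
end

section
/- Let b_1 ≥ 11 be an integer and set b_2 = 3b_1 + 5. Let A_1 be a finite set of positive integers contained in [1, b_1 − 1] with P(A_1) = [0, b_1 − 1]. Then P(A_1 ∪ {b_1 + 1, b_1 + 2, b_1 + 3}) = [0, b_1 + b_2] \ {b_1, b_2}. -/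
theorem stmt_6 (b1 b2 : ℕ) (hb1 : 11 ≤ b1) (hb2 : b2 = 3 * b1 + 5)
    (A1 : Finset ℕ)
    (hA1sub : ↑A1 ⊆ Set.Icc 1 (b1 - 1))
    (hA1 : subsetSums ↑A1 = Set.Icc 0 (b1 - 1)) :
    subsetSums ↑(A1 ∪ {b1 + 1, b1 + 2, b1 + 3}) =
      Set.Icc 0 (b1 + b2) \ {b1, b2} := by
  subst hb2
  have hA1le : ∀ x ∈ A1, 1 ≤ x ∧ x ≤ b1 - 1 := by
    intro x hx
    have := hA1sub hx
    simpa using this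
  have key : ∀ (n t : ℕ) (G : Finset ℕ), G ⊆ ({b1+1, b1+2, b1+3} : Finset ℕ) →
      G.sum id = t → t ≤ n → n ≤ b1 - 1 + t →
      n ∈ subsetSums ↑(A1 ∪ {b1 + 1, b1 + 2, b1 + 3}) := by
    intro n t G hG hGs htn hnt
    have hs : n - t ∈ subsetSums ↑A1 := by
      rw [hA1]; simp; omega
    obtain ⟨Fs, hFs, hFsum⟩ := hs
    have hFsA1 : Fs ⊆ A1 := Finset.coe_subset.mp hFs
    have hdisj : Disjoint Fs G := by
      rw [Finset.disjoint_left]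
      intro x hxF hxG
      have h1 := hA1le x (hFsA1 hxF)
      have h2 := hG hxG
      simp [Finset.mem_insert] at h2
      omega
    refine ⟨Fs ∪ G, ?_, ?_⟩
    · rw [Finset.coe_subset]
      exact Finset.union_subset_union hFsA1 hG
    · rw [Finset.sum_union hdisj, hFsum, hGs]; omega
  ext n
  simp only [Set.mem_diff, Set.mem_Icc, Set.mem_insert_iff, Set.mem_singleton_iff]
  constructor
  · rintro ⟨F, hF, rfl⟩
    have hFsub : ∀ x ∈ F, x ∈ A1 ∨ x = b1+1 ∨ x = b1+2 ∨ x = b1+3 := by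
      intro x hx
      have := hF hx
      simp at this
      tauto
    set S := F ∩ A1 with hS
    set T := F \ A1 with hT
    have hsum : S.sum id + T.sum id = F.sum id := Finset.sum_inter_add_sum_sdiff F A1 id
    have hSmem : S.sum id ∈ subsetSums ↑A1 := ⟨S, by simp [hS], rfl⟩
    rw [hA1] at hSmem
    have hSle : S.sum id ≤ b1 - 1 := hSmem.2
    have hTsub : T ⊆ ({b1+1, b1+2, b1+3} : Finset ℕ) := by
      intro x hx
      rw [hT, Finset.mem_sdiff] at hx
      rcases hFsub x hx.1 with h | h
      · exact absurd h hx.2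
      · simp [Finset.mem_insert]; tauto
    have hTeq : T = ({b1+1, b1+2, b1+3} : Finset ℕ).filter (· ∈ T) := by
      ext x
      simp only [Finset.mem_filter]
      exact ⟨fun h => ⟨hTsub h, h⟩, fun h => h.2⟩
    have hTsum : T.sum id = (if b1+1 ∈ T then b1+1 else 0) +
        ((if b1+2 ∈ T then b1+2 else 0) + (if b1+3 ∈ T then b1+3 else 0)) := by
      conv_lhs => rw [hTeq]
      rw [Finset.sum_filter]
      rw [Finset.sum_insert (by simp only [Finset.mem_insert, Finset.mem_singleton]; omega), Finset.sum_insert (by simp only [Finset.mem_singleton]; omega),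
        Finset.sum_singleton]
      simp only [id]
    split_ifs at hTsum <;> omega
  · rintro ⟨⟨-, hn⟩, hne⟩
    push_neg at hne
    obtain ⟨hne1, hne2⟩ := hne
    have e1 : ({b1+1} : Finset ℕ).sum id = b1+1 := Finset.sum_singleton _ _
    have e2 : ({b1+2} : Finset ℕ).sum id = b1+2 := Finset.sum_singleton _ _
    have e3 : ({b1+3} : Finset ℕ).sum id = b1+3 := Finset.sum_singleton _ _
    have e12 : ({b1+1, b1+2} : Finset ℕ).sum id = 2*b1+3 := by
      rw [Finset.sum_pair (by omega)]; simp; ring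
    have e13 : ({b1+1, b1+3} : Finset ℕ).sum id = 2*b1+4 := by
      rw [Finset.sum_pair (by omega)]; simp; ring
    have e23 : ({b1+2, b1+3} : Finset ℕ).sum id = 2*b1+5 := by
      rw [Finset.sum_pair (by omega)]; simp; ring
    have e123 : ({b1+1, b1+2, b1+3} : Finset ℕ).sum id = 3*b1+6 := by
      rw [Finset.sum_insert (by simp only [Finset.mem_insert, Finset.mem_singleton]; omega), Finset.sum_pair (by omega)]; simp; ring
    rcases le_or_gt n (b1 - 1) with h | h
    · exact key n 0 ∅ (by simp) rfl (by omega) (by omega)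
    rcases le_or_gt n (2*b1) with h2 | h2
    · exact key n (b1+1) {b1+1} (by intro x hx; simp at hx ⊢; tauto) e1 (by omega) (by omega)
    rcases le_or_gt n (2*b1+1) with h3 | h3
    · exact key n (b1+2) {b1+2} (by intro x hx; simp at hx ⊢; tauto) e2 (by omega) (by omega)
    rcases le_or_gt n (2*b1+2) with h4 | h4
    · exact key n (b1+3) {b1+3} (by intro x hx; simp at hx ⊢; tauto) e3 (by omega) (by omega)
    rcases le_or_gt n (3*b1+2) with h5 | h5
    · exact key n (2*b1+3) {b1+1, b1+2} (by intro x hx; simp at hx; simp; tauto) e12 (by omega) (by omega)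
    rcases le_or_gt n (3*b1+3) with h6 | h6
    · exact key n (2*b1+4) {b1+1, b1+3} (by intro x hx; simp at hx; simp; tauto) e13 (by omega) (by omega)
    rcases le_or_gt n (3*b1+4) with h7 | h7
    · exact key n (2*b1+5) {b1+2, b1+3} (by intro x hx; simp at hx; simp; tauto) e23 (by omega) (by omega)
    · exact key n (3*b1+6) {b1+1, b1+2, b1+3} (by simp) e123 (by omega) (by omega)
end

section
/- Let b_1 ≥ 11 be an integer and set b_2 = 3b_1 + 5. Let A_1 be a finite set of positive integers contained in [1, b_1 − 1] with P(A_1) = [0, b_1 − 1]. Then P(A_1 ∪ {b_1 + 1, b_1 + 2, b_1 + 3, b_1 + b_2}) = [0, 2b_1 + 2b_2] \ {b_1, b_2, 2b_1 + b_2, b_1 + 2b_2}. -/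
theorem stmt_7 (b1 b2 : ℕ) (hb1 : 11 ≤ b1) (hb2 : b2 = 3 * b1 + 5)
    (A1 : Finset ℕ)
    (hA1sub : ↑A1 ⊆ Set.Icc 1 (b1 - 1))
    (hA1 : subsetSums ↑A1 = Set.Icc 0 (b1 - 1)) :
    subsetSums ↑(A1 ∪ {b1 + 1, b1 + 2, b1 + 3, b1 + b2}) =
      Set.Icc 0 (2 * b1 + 2 * b2) \ {b1, b2, 2 * b1 + b2, b1 + 2 * b2} := by
  subst hb2
  have hBmem : ∀ x ∈ ({b1 + 1, b1 + 2, b1 + 3, b1 + (3 * b1 + 5)} : Finset ℕ), b1 + 1 ≤ x := by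
    intro x hx
    simp only [Finset.mem_insert, Finset.mem_singleton] at hx
    omega
  have helper : ∀ s ≤ b1 - 1, ∀ G : Finset ℕ,
      G ⊆ ({b1 + 1, b1 + 2, b1 + 3, b1 + (3 * b1 + 5)} : Finset ℕ) →
      s + G.sum id ∈ subsetSums ↑(A1 ∪ {b1 + 1, b1 + 2, b1 + 3, b1 + (3 * b1 + 5)}) := by
    intro s hs G hG
    have hsmem : s ∈ subsetSums ↑A1 := by
      rw [hA1]; exact Set.mem_Icc.mpr ⟨Nat.zero_le _, hs⟩
    obtain ⟨F1, hF1sub, hF1sum⟩ := hsmem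
    have hdisj : Disjoint F1 G := by
      rw [Finset.disjoint_left]
      intro x hx1 hx2
      have h1 : x ≤ b1 - 1 := (hA1sub (hF1sub hx1)).2
      have h2 := hBmem x (hG hx2)
      omega
    refine ⟨F1 ∪ G, ?_, ?_⟩
    · intro x hx
      simp only [Finset.coe_union, Set.mem_union, Finset.mem_coe] at hx ⊢
      rcases hx with h | h
      · exact Or.inl (hF1sub h)
      · exact Or.inr (hG h)
    · rw [Finset.sum_union hdisj, hF1sum]
  have helper2 : ∀ (G : Finset ℕ) (t : ℕ),
      G ⊆ ({b1 + 1, b1 + 2, b1 + 3, b1 + (3 * b1 + 5)} : Finset ℕ) → G.sum id = t →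
      ∀ n, t ≤ n → n ≤ t + (b1 - 1) →
      n ∈ subsetSums ↑(A1 ∪ {b1 + 1, b1 + 2, b1 + 3, b1 + (3 * b1 + 5)}) := by
    intro G t hG ht n h1 h2
    have h := helper (n - t) (by omega) G hG
    rwa [ht, Nat.sub_add_cancel h1] at h
  ext n
  constructor
  · rintro ⟨F, hFsub, hFsum⟩
    have hsplit : (F ∩ A1).sum id + (F \ A1).sum id = F.sum id :=
      Finset.sum_inter_add_sum_sdiff F A1 id
    have hF1 : (F ∩ A1).sum id ∈ subsetSums ↑A1 :=
      ⟨F ∩ A1, Finset.coe_subset.mpr Finset.inter_subset_right, rfl⟩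
    rw [hA1] at hF1
    have hs : (F ∩ A1).sum id ≤ b1 - 1 := hF1.2
    have hF2B : F \ A1 ⊆ ({b1 + 1, b1 + 2, b1 + 3, b1 + (3 * b1 + 5)} : Finset ℕ) := by
      intro x hx
      rw [Finset.mem_sdiff] at hx
      have := hFsub hx.1
      simp only [Finset.coe_union, Set.mem_union, Finset.mem_coe] at this
      rcases this with h | h
      · exact absurd h hx.2
      · exact h
    have hF2eq : F \ A1 =
        ({b1 + 1, b1 + 2, b1 + 3, b1 + (3 * b1 + 5)} : Finset ℕ).filter (· ∈ F \ A1) := by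
      ext x
      simp only [Finset.mem_filter]
      constructor
      · intro hx; exact ⟨hF2B hx, hx⟩
      · rintro ⟨_, h⟩; exact h
    have ht : (F \ A1).sum id =
        (if b1 + 1 ∈ F \ A1 then b1 + 1 else 0) +
        ((if b1 + 2 ∈ F \ A1 then b1 + 2 else 0) +
        ((if b1 + 3 ∈ F \ A1 then b1 + 3 else 0) +
        (if b1 + (3 * b1 + 5) ∈ F \ A1 then b1 + (3 * b1 + 5) else 0))) := by
      conv_lhs => rw [hF2eq]
      rw [Finset.sum_filter]
      rw [show ({b1 + 1, b1 + 2, b1 + 3, b1 + (3 * b1 + 5)} : Finset ℕ) =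
          insert (b1 + 1) (insert (b1 + 2) (insert (b1 + 3) {b1 + (3 * b1 + 5)})) from rfl]
      rw [Finset.sum_insert (by simp only [Finset.mem_insert, Finset.mem_singleton]; omega),
        Finset.sum_insert (by simp only [Finset.mem_insert, Finset.mem_singleton]; omega),
        Finset.sum_insert (by simp only [Finset.mem_singleton]; omega),
        Finset.sum_singleton]
      simp only [id_eq]
    simp only [Set.mem_diff, Set.mem_Icc, Set.mem_insert_iff, Set.mem_singleton_iff, not_or]
    split_ifs at ht <;> omega
  · intro hn
    simp only [Set.mem_diff, Set.mem_Icc, Set.mem_insert_iff, Set.mem_singleton_iff,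
      not_or] at hn
    obtain ⟨⟨-, hub⟩, hn1, hn2, hn3, hn4⟩ := hn
    have sub1 : ∀ G : Finset ℕ,
        (∀ x ∈ G, x = b1 + 1 ∨ x = b1 + 2 ∨ x = b1 + 3 ∨ x = b1 + (3 * b1 + 5)) →
        G ⊆ ({b1 + 1, b1 + 2, b1 + 3, b1 + (3 * b1 + 5)} : Finset ℕ) := by
      intro G h x hx
      simp only [Finset.mem_insert, Finset.mem_singleton]
      exact h x hx
    rcases (by omega :
        n ≤ b1 - 1 ∨ (b1 + 1 ≤ n ∧ n ≤ 2 * b1) ∨ n = 2 * b1 + 1 ∨ n = 2 * b1 + 2 ∨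
        (2 * b1 + 3 ≤ n ∧ n ≤ 3 * b1 + 2) ∨ n = 3 * b1 + 3 ∨ n = 3 * b1 + 4 ∨
        (3 * b1 + 6 ≤ n ∧ n ≤ 4 * b1 + 4) ∨ (4 * b1 + 5 ≤ n ∧ n ≤ 5 * b1 + 4) ∨
        (5 * b1 + 6 ≤ n ∧ n ≤ 6 * b1 + 5) ∨ n = 6 * b1 + 6 ∨ n = 6 * b1 + 7 ∨
        (6 * b1 + 8 ≤ n ∧ n ≤ 7 * b1 + 7) ∨ n = 7 * b1 + 8 ∨ n = 7 * b1 + 9 ∨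
        (7 * b1 + 11 ≤ n ∧ n ≤ 8 * b1 + 10)) with
      h | h | h | h | h | h | h | h | h | h | h | h | h | h | h | h
    · exact helper2 ∅ 0 (by intro x hx; simp at hx) rfl n (by omega) (by omega)
    · refine helper2 {b1 + 1} (b1 + 1) ?_ ?_ n (by omega) (by omega)
      · apply sub1; intro x hx; simp only [Finset.mem_singleton] at hx; omega
      · rw [Finset.sum_singleton]; rfl
    · refine helper2 {b1 + 2} (b1 + 2) ?_ ?_ n (by omega) (by omega)
      · apply sub1; intro x hx; simp only [Finset.mem_singleton] at hx; omega
      · rw [Finset.sum_singleton]; rfl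
    · refine helper2 {b1 + 3} (b1 + 3) ?_ ?_ n (by omega) (by omega)
      · apply sub1; intro x hx; simp only [Finset.mem_singleton] at hx; omega
      · rw [Finset.sum_singleton]; rfl
    · refine helper2 {b1 + 1, b1 + 2} (2 * b1 + 3) ?_ ?_ n (by omega) (by omega)
      · apply sub1; intro x hx; simp only [Finset.mem_insert, Finset.mem_singleton] at hx; omega
      · rw [Finset.sum_insert (by simp only [Finset.mem_singleton]; omega),
          Finset.sum_singleton]; simp only [id_eq]; omega
    · refine helper2 {b1 + 1, b1 + 3} (2 * b1 + 4) ?_ ?_ n (by omega) (by omega)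
      · apply sub1; intro x hx; simp only [Finset.mem_insert, Finset.mem_singleton] at hx; omega
      · rw [Finset.sum_insert (by simp only [Finset.mem_singleton]; omega),
          Finset.sum_singleton]; simp only [id_eq]; omega
    · refine helper2 {b1 + 2, b1 + 3} (2 * b1 + 5) ?_ ?_ n (by omega) (by omega)
      · apply sub1; intro x hx; simp only [Finset.mem_insert, Finset.mem_singleton] at hx; omega
      · rw [Finset.sum_insert (by simp only [Finset.mem_singleton]; omega),
          Finset.sum_singleton]; simp only [id_eq]; omega
    · refine helper2 {b1 + 1, b1 + 2, b1 + 3} (3 * b1 + 6) ?_ ?_ n (by omega) (by omega)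
      · apply sub1; intro x hx; simp only [Finset.mem_insert, Finset.mem_singleton] at hx; omega
      · rw [Finset.sum_insert (by simp only [Finset.mem_insert, Finset.mem_singleton]; omega),
          Finset.sum_insert (by simp only [Finset.mem_singleton]; omega),
          Finset.sum_singleton]; simp only [id_eq]; omega
    · refine helper2 {b1 + (3 * b1 + 5)} (4 * b1 + 5) ?_ ?_ n (by omega) (by omega)
      · apply sub1; intro x hx; simp only [Finset.mem_singleton] at hx; omega
      · rw [Finset.sum_singleton]; simp only [id_eq]; omega
    · refine helper2 {b1 + 1, b1 + (3 * b1 + 5)} (5 * b1 + 6) ?_ ?_ n (by omega) (by omega)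
      · apply sub1; intro x hx; simp only [Finset.mem_insert, Finset.mem_singleton] at hx; omega
      · rw [Finset.sum_insert (by simp only [Finset.mem_singleton]; omega),
          Finset.sum_singleton]; simp only [id_eq]; omega
    · refine helper2 {b1 + 2, b1 + (3 * b1 + 5)} (5 * b1 + 7) ?_ ?_ n (by omega) (by omega)
      · apply sub1; intro x hx; simp only [Finset.mem_insert, Finset.mem_singleton] at hx; omega
      · rw [Finset.sum_insert (by simp only [Finset.mem_singleton]; omega),
          Finset.sum_singleton]; simp only [id_eq]; omega
    · refine helper2 {b1 + 3, b1 + (3 * b1 + 5)} (5 * b1 + 8) ?_ ?_ n (by omega) (by omega)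
      · apply sub1; intro x hx; simp only [Finset.mem_insert, Finset.mem_singleton] at hx; omega
      · rw [Finset.sum_insert (by simp only [Finset.mem_singleton]; omega),
          Finset.sum_singleton]; simp only [id_eq]; omega
    · refine helper2 {b1 + 1, b1 + 2, b1 + (3 * b1 + 5)} (6 * b1 + 8) ?_ ?_ n (by omega) (by omega)
      · apply sub1; intro x hx; simp only [Finset.mem_insert, Finset.mem_singleton] at hx; omega
      · rw [Finset.sum_insert (by simp only [Finset.mem_insert, Finset.mem_singleton]; omega),
          Finset.sum_insert (by simp only [Finset.mem_singleton]; omega),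
          Finset.sum_singleton]; simp only [id_eq]; omega
    · refine helper2 {b1 + 1, b1 + 3, b1 + (3 * b1 + 5)} (6 * b1 + 9) ?_ ?_ n (by omega) (by omega)
      · apply sub1; intro x hx; simp only [Finset.mem_insert, Finset.mem_singleton] at hx; omega
      · rw [Finset.sum_insert (by simp only [Finset.mem_insert, Finset.mem_singleton]; omega),
          Finset.sum_insert (by simp only [Finset.mem_singleton]; omega),
          Finset.sum_singleton]; simp only [id_eq]; omega
    · refine helper2 {b1 + 2, b1 + 3, b1 + (3 * b1 + 5)} (6 * b1 + 10) ?_ ?_ n (by omega) (by omega)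
      · apply sub1; intro x hx; simp only [Finset.mem_insert, Finset.mem_singleton] at hx; omega
      · rw [Finset.sum_insert (by simp only [Finset.mem_insert, Finset.mem_singleton]; omega),
          Finset.sum_insert (by simp only [Finset.mem_singleton]; omega),
          Finset.sum_singleton]; simp only [id_eq]; omega
    · refine helper2 {b1 + 1, b1 + 2, b1 + 3, b1 + (3 * b1 + 5)} (7 * b1 + 11)
        (fun x hx => hx) ?_ n (by omega) (by omega)
      rw [Finset.sum_insert (by simp only [Finset.mem_insert, Finset.mem_singleton]; omega),
        Finset.sum_insert (by simp only [Finset.mem_insert, Finset.mem_singleton]; omega),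
        Finset.sum_insert (by simp only [Finset.mem_singleton]; omega),
        Finset.sum_singleton]; simp only [id_eq]; omega
end

section
/- Let b_1 ≥ 11 be an integer and set b_2 = 3b_1 + 5 and b_3 = 3b_2 + 2. Let A_1 be a finite set of positive integers contained in [1, b_1 − 1] with P(A_1) = [0, b_1 − 1], and let A_3 = A_1 ∪ {b_1 + 1, b_1 + 2, b_1 + 3, b_1 + b_2, 2b_2 − 2b_1 + 2}. Then P(A_3 ∪ {b_3 + b_2 − b_1}) = [0, 2b_3 + 2b_2 − b_1] \ {b_1, b_2, b_3, b_3 + 2b_2 − b_1, 2b_3 + b_2 − b_1, 2b_3 + 2b_2 − 2b_1}. -/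
lemma subsetSums_insert_s9 (A : Set ℕ) (s : ℕ) (hs : s ∉ A) (P : ℕ → Prop)
    (hP : subsetSums A = {n | P n}) :
    subsetSums (insert s A) = {n | P n ∨ (s ≤ n ∧ P (n - s))} := by
  ext n
  simp only [Set.mem_setOf_eq]
  constructor
  · rintro ⟨F, hF, rfl⟩
    by_cases h : s ∈ F
    · right
      have hsum : F.sum id = s + (F.erase s).sum id := by
        rw [← Finset.add_sum_erase _ _ h]; rfl
      have hmem : (F.erase s).sum id ∈ subsetSums A := by
        refine ⟨F.erase s, ?_, rfl⟩
        intro x hx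
        simp only [Finset.coe_erase, Set.mem_diff, Set.mem_singleton_iff,
          Finset.mem_coe] at hx
        rcases hF hx.1 with h' | h'
        · exact absurd h' hx.2
        · exact h'
      rw [hP] at hmem
      constructor
      · omega
      · have : F.sum id - s = (F.erase s).sum id := by omega
        rwa [this]
    · left
      have hmem : F.sum id ∈ subsetSums A := by
        refine ⟨F, ?_, rfl⟩
        intro x hx
        rcases hF hx with h' | h'
        · exact absurd (h' ▸ hx) h
        · exact h'
      rwa [hP] at hmem
  · rintro (h | ⟨hle, h⟩)
    · have : n ∈ subsetSums A := by rw [hP]; exact h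
      obtain ⟨F, hF, rfl⟩ := this
      exact ⟨F, fun x hx => Set.mem_insert_iff.2 (Or.inr (hF hx)), rfl⟩
    · have : n - s ∈ subsetSums A := by rw [hP]; exact h
      obtain ⟨F, hF, hsum⟩ := this
      have hsF : s ∉ F := fun hmem => hs (hF hmem)
      refine ⟨insert s F, ?_, ?_⟩
      · intro x hx
        simp only [Finset.coe_insert, Set.mem_insert_iff, Finset.mem_coe] at hx
        rcases hx with rfl | hx
        · exact Set.mem_insert _ _
        · exact Set.mem_insert_iff.2 (Or.inr (hF hx))
      · rw [Finset.sum_insert hsF, hsum]; simp; omega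

theorem stmt_9 (b1 b2 b3 : ℕ) (hb1 : 11 ≤ b1)
    (hb2 : b2 = 3 * b1 + 5) (hb3 : b3 = 3 * b2 + 2)
    (A1 : Finset ℕ)
    (hA1sub : ↑A1 ⊆ Set.Icc 1 (b1 - 1))
    (hA1 : subsetSums ↑A1 = Set.Icc 0 (b1 - 1)) :
    subsetSums
        ↑(A1 ∪ {b1 + 1, b1 + 2, b1 + 3, b1 + b2, 2 * b2 - 2 * b1 + 2,
            b3 + b2 - b1}) =
      Set.Icc 0 (2 * b3 + 2 * b2 - b1) \
        {b1, b2, b3, b3 + 2 * b2 - b1, 2 * b3 + b2 - b1,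
         2 * b3 + 2 * b2 - 2 * b1} := by
  subst hb3 hb2
  have hA1' : ∀ n : ℕ, n ∈ (↑A1 : Set ℕ) → 1 ≤ n ∧ n ≤ b1 - 1 := by
    intro n hn
    have := hA1sub hn
    simpa using this
  -- rewrite the finset union as nested inserts (as a set)
  have hset : (↑(A1 ∪ {b1 + 1, b1 + 2, b1 + 3, b1 + (3*b1+5),
        2 * (3*b1+5) - 2 * b1 + 2, 3*(3*b1+5)+2 + (3*b1+5) - b1}) : Set ℕ) =
      insert (11*b1+22) (insert (4*b1+12) (insert (4*b1+5)
        (insert (b1+3) (insert (b1+2) (insert (b1+1) (↑A1 : Set ℕ)))))) := by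
    have e1 : b1 + (3*b1+5) = 4*b1+5 := by omega
    have e2 : 2 * (3*b1+5) - 2 * b1 + 2 = 4*b1+12 := by omega
    have e3 : 3*(3*b1+5)+2 + (3*b1+5) - b1 = 11*b1+22 := by omega
    rw [e1, e2, e3]
    ext n
    simp only [Finset.coe_union, Finset.coe_insert, Finset.coe_singleton,
      Set.mem_union, Set.mem_insert_iff, Set.mem_singleton_iff, Finset.mem_coe]
    tauto
  rw [hset]
  have h0 : subsetSums (↑A1 : Set ℕ) = {n | n ≤ b1 - 1} := by
    rw [hA1]; ext n; simp
  have h1 : subsetSums (insert (b1+1) (↑A1 : Set ℕ)) =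
      {n | n ≤ 2*b1 ∧ n ≠ b1} := by
    rw [subsetSums_insert_s9 _ _ (fun h => by have := hA1' _ h; omega) _ h0]
    ext n; simp only [Set.mem_setOf_eq]; omega
  have h2 : subsetSums (insert (b1+2) (insert (b1+1) (↑A1 : Set ℕ))) =
      {n | n ≤ 3*b1+2 ∧ n ≠ b1 ∧ n ≠ 2*b1+2} := by
    rw [subsetSums_insert_s9 _ _ ?_ _ h1]
    · ext n; simp only [Set.mem_setOf_eq]; omega
    · intro h
      rcases h with h | h
      · omega
      · have := hA1' _ h; omega
  have h3 : subsetSums (insert (b1+3) (insert (b1+2) (insert (b1+1) (↑A1 : Set ℕ)))) =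
      {n | n ≤ 4*b1+5 ∧ n ≠ b1 ∧ n ≠ 3*b1+5} := by
    rw [subsetSums_insert_s9 _ _ ?_ _ h2]
    · ext n; simp only [Set.mem_setOf_eq]; omega
    · intro h
      rcases h with h | h | h
      · omega
      · omega
      · have := hA1' _ h; omega
  have h4 : subsetSums (insert (4*b1+5) (insert (b1+3) (insert (b1+2)
      (insert (b1+1) (↑A1 : Set ℕ))))) =
      {n | n ≤ 8*b1+10 ∧ n ≠ b1 ∧ n ≠ 3*b1+5 ∧ n ≠ 5*b1+5 ∧ n ≠ 7*b1+10} := by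
    rw [subsetSums_insert_s9 _ _ ?_ _ h3]
    · ext n; simp only [Set.mem_setOf_eq]; omega
    · intro h
      rcases h with h | h | h | h
      · omega
      · omega
      · omega
      · have := hA1' _ h; omega
  have h5 : subsetSums (insert (4*b1+12) (insert (4*b1+5) (insert (b1+3)
      (insert (b1+2) (insert (b1+1) (↑A1 : Set ℕ)))))) =
      {n | n ≤ 12*b1+22 ∧ n ≠ b1 ∧ n ≠ 3*b1+5 ∧ n ≠ 9*b1+17 ∧ n ≠ 11*b1+22} := by
    rw [subsetSums_insert_s9 _ _ ?_ _ h4]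
    · ext n; simp only [Set.mem_setOf_eq]; omega
    · intro h
      rcases h with h | h | h | h | h
      · omega
      · omega
      · omega
      · omega
      · have := hA1' _ h; omega
  have h6 : subsetSums (insert (11*b1+22) (insert (4*b1+12) (insert (4*b1+5)
      (insert (b1+3) (insert (b1+2) (insert (b1+1) (↑A1 : Set ℕ))))))) =
      {n | n ≤ 23*b1+44 ∧ n ≠ b1 ∧ n ≠ 3*b1+5 ∧ n ≠ 9*b1+17 ∧ n ≠ 14*b1+27
        ∧ n ≠ 20*b1+39 ∧ n ≠ 22*b1+44} := by
    rw [subsetSums_insert_s9 _ _ ?_ _ h5]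
    · ext n; simp only [Set.mem_setOf_eq]; omega
    · intro h
      rcases h with h | h | h | h | h | h
      · omega
      · omega
      · omega
      · omega
      · omega
      · have := hA1' _ h; omega
  rw [h6]
  ext n
  simp only [Set.mem_setOf_eq, Set.mem_diff, Set.mem_Icc, Set.mem_insert_iff,
    Set.mem_singleton_iff]
  omega
end

section
/- Let b_1 ≥ 11 be an integer and set b_2 = 3b_1 + 5 and b_3 = 3b_2 + 2. Let A_1 be a finite set of positive integers contained in [1, b_1 − 1] with P(A_1) = [0, b_1 − 1], and let A_3 = A_1 ∪ {b_1 + 1, b_1 + 2, b_1 + 3, b_1 + b_2, 2b_2 − 2b_1 + 2}. Then P(A_3 ∪ {b_3 + b_2 − b_1, b_3 + 2b_2 − b_1}) = [0, 3b_3 + 4b_2 − 2b_1] \ {b_1, b_2, b_3, 2b_3 + 4b_2 − 2b_1, 3b_3 + 3b_2 − 2b_1, 3b_3 + 4b_2 − 3b_1}. -/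
lemma mem_subsetSums_insert (x : ℕ) (A : Set ℕ) (hx : x ∉ A) (n : ℕ) :
    n ∈ subsetSums (insert x A) ↔
      n ∈ subsetSums A ∨ (x ≤ n ∧ n - x ∈ subsetSums A) := by
  constructor
  · rintro ⟨F, hF, rfl⟩
    by_cases hxF : x ∈ F
    · right
      refine ⟨?_, ⟨F.erase x, ?_, ?_⟩⟩
      · rw [← Finset.add_sum_erase F id hxF]
        simp only [id_eq]
        omega
      · intro y hy
        simp only [Finset.coe_erase, Set.mem_diff, Set.mem_singleton_iff] at hy
        rcases hF hy.1 with h | h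
        · exact absurd h hy.2
        · exact h
      · rw [← Finset.add_sum_erase F id hxF]
        simp only [id_eq]
        omega
    · left
      refine ⟨F, fun y hy => ?_, rfl⟩
      rcases hF hy with h | h
      · exact absurd (h ▸ hy) (by simpa using hxF)
      · exact h
  · rintro (⟨F, hF, rfl⟩ | ⟨hxn, F, hF, hs⟩)
    · exact ⟨F, fun y hy => Set.mem_insert_of_mem _ (hF hy), rfl⟩
    · have hxF : x ∉ F := fun h => hx (hF h)
      refine ⟨insert x F, ?_, ?_⟩
      · intro y hy
        simp only [Finset.coe_insert, Set.mem_insert_iff] at hy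
        rcases hy with rfl | hy
        · exact Set.mem_insert _ _
        · exact Set.mem_insert_of_mem _ (hF hy)
      · rw [Finset.sum_insert hxF]
        simp only [id] at hs ⊢
        omega

theorem stmt_10 (b1 b2 b3 : ℕ) (hb1 : 11 ≤ b1)
    (hb2 : b2 = 3 * b1 + 5) (hb3 : b3 = 3 * b2 + 2)
    (A1 : Finset ℕ)
    (hA1sub : ↑A1 ⊆ Set.Icc 1 (b1 - 1))
    (hA1 : subsetSums ↑A1 = Set.Icc 0 (b1 - 1)) :
    subsetSums
        ↑(A1 ∪ {b1 + 1, b1 + 2, b1 + 3, b1 + b2, 2 * b2 - 2 * b1 + 2,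
            b3 + b2 - b1, b3 + 2 * b2 - b1}) =
      Set.Icc 0 (3 * b3 + 4 * b2 - 2 * b1) \
        {b1, b2, b3, 2 * b3 + 4 * b2 - 2 * b1, 3 * b3 + 3 * b2 - 2 * b1,
         3 * b3 + 4 * b2 - 3 * b1} := by
  subst hb2 hb3
  have hnotA : ∀ m : ℕ, b1 ≤ m → m ∉ (↑A1 : Set ℕ) := by
    intro m hm h
    have := hA1sub h
    simp only [Set.mem_Icc] at this
    omega
  -- the seven extra elements
  set e1 := b1 + 1 with he1
  set e2 := b1 + 2 with he2
  set e3 := b1 + 3 with he3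
  set e4 := b1 + (3 * b1 + 5) with he4
  set e5 := 2 * (3 * b1 + 5) - 2 * b1 + 2 with he5
  set e6 := 3 * (3 * b1 + 5) + 2 + (3 * b1 + 5) - b1 with he6
  set e7 := 3 * (3 * b1 + 5) + 2 + 2 * (3 * b1 + 5) - b1 with he7
  -- rewrite the underlying set as a chain of insertions, small elements innermost
  have hset : (↑(A1 ∪ {e1, e2, e3, e4, e5, e6, e7}) : Set ℕ)
      = insert e7 (insert e6 (insert e5 (insert e4 (insert e3
          (insert e2 (insert e1 (↑A1 : Set ℕ))))))) := by
    ext m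
    simp only [Finset.coe_union, Set.mem_union, Finset.mem_coe, Finset.mem_insert,
      Finset.mem_singleton, Set.mem_insert_iff]
    tauto
  -- non-membership facts
  have k1 : e1 ∉ (↑A1 : Set ℕ) := hnotA _ (by omega)
  have k2 : e2 ∉ insert e1 (↑A1 : Set ℕ) := by
    simp only [Set.mem_insert_iff, not_or]
    exact ⟨by omega, hnotA _ (by omega)⟩
  have k3 : e3 ∉ insert e2 (insert e1 (↑A1 : Set ℕ)) := by
    simp only [Set.mem_insert_iff, not_or]
    exact ⟨by omega, by omega, hnotA _ (by omega)⟩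
  have k4 : e4 ∉ insert e3 (insert e2 (insert e1 (↑A1 : Set ℕ))) := by
    simp only [Set.mem_insert_iff, not_or]
    exact ⟨by omega, by omega, by omega, hnotA _ (by omega)⟩
  have k5 : e5 ∉ insert e4 (insert e3 (insert e2 (insert e1 (↑A1 : Set ℕ)))) := by
    simp only [Set.mem_insert_iff, not_or]
    exact ⟨by omega, by omega, by omega, by omega, hnotA _ (by omega)⟩
  have k6 : e6 ∉ insert e5 (insert e4 (insert e3 (insert e2 (insert e1 (↑A1 : Set ℕ))))) := by
    simp only [Set.mem_insert_iff, not_or]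
    exact ⟨by omega, by omega, by omega, by omega, by omega, hnotA _ (by omega)⟩
  have k7 : e7 ∉ insert e6 (insert e5 (insert e4 (insert e3 (insert e2
      (insert e1 (↑A1 : Set ℕ)))))) := by
    simp only [Set.mem_insert_iff, not_or]
    exact ⟨by omega, by omega, by omega, by omega, by omega, by omega, hnotA _ (by omega)⟩
  -- stagewise computation of the subset sums
  have H1 : subsetSums (insert e1 (↑A1 : Set ℕ))
      = {n | n ≤ 2 * b1 ∧ n ≠ b1} := by
    ext n
    rw [mem_subsetSums_insert _ _ k1, hA1]
    simp only [Set.mem_Icc, Set.mem_setOf_eq]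
    omega
  have H2 : subsetSums (insert e2 (insert e1 (↑A1 : Set ℕ)))
      = {n | n ≤ 3 * b1 + 2 ∧ n ≠ b1 ∧ n ≠ 2 * b1 + 2} := by
    ext n
    rw [mem_subsetSums_insert _ _ k2, H1]
    simp only [Set.mem_setOf_eq]
    omega
  have H3 : subsetSums (insert e3 (insert e2 (insert e1 (↑A1 : Set ℕ))))
      = {n | n ≤ 4 * b1 + 5 ∧ n ≠ b1 ∧ n ≠ 3 * b1 + 5} := by
    ext n
    rw [mem_subsetSums_insert _ _ k3, H2]
    simp only [Set.mem_setOf_eq]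
    omega
  have H4 : subsetSums (insert e4 (insert e3 (insert e2 (insert e1 (↑A1 : Set ℕ)))))
      = {n | n ≤ 8 * b1 + 10 ∧ n ≠ b1 ∧ n ≠ 3 * b1 + 5 ∧ n ≠ 5 * b1 + 5
          ∧ n ≠ 7 * b1 + 10} := by
    ext n
    rw [mem_subsetSums_insert _ _ k4, H3]
    simp only [Set.mem_setOf_eq]
    omega
  have H5 : subsetSums (insert e5 (insert e4 (insert e3 (insert e2
        (insert e1 (↑A1 : Set ℕ))))))
      = {n | n ≤ 12 * b1 + 22 ∧ n ≠ b1 ∧ n ≠ 3 * b1 + 5 ∧ n ≠ 9 * b1 + 17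
          ∧ n ≠ 11 * b1 + 22} := by
    ext n
    rw [mem_subsetSums_insert _ _ k5, H4]
    simp only [Set.mem_setOf_eq]
    omega
  have H6 : subsetSums (insert e6 (insert e5 (insert e4 (insert e3 (insert e2
        (insert e1 (↑A1 : Set ℕ)))))))
      = {n | n ≤ 23 * b1 + 44 ∧ n ≠ b1 ∧ n ≠ 3 * b1 + 5 ∧ n ≠ 9 * b1 + 17
          ∧ n ≠ 14 * b1 + 27 ∧ n ≠ 20 * b1 + 39 ∧ n ≠ 22 * b1 + 44} := by
    ext n
    rw [mem_subsetSums_insert _ _ k6, H5]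
    simp only [Set.mem_setOf_eq]
    omega
  ext n
  rw [hset, mem_subsetSums_insert _ _ k7, H6, Set.mem_diff]
  simp only [Set.mem_setOf_eq, Set.mem_Icc, Set.mem_insert_iff, Set.mem_singleton_iff,
    not_or]
  omega
end

section
/- Let b_1 ≥ 11 be an integer and set b_2 = 3b_1 + 5, b_3 = 3b_2 + 2, and b_4 = 3b_3 + 4b_2. Let A_1 be a finite set of positive integers contained in [1, b_1 − 1] with P(A_1) = [0, b_1 − 1], let A_3 = A_1 ∪ {b_1 + 1, b_1 + 2, b_1 + 3, b_1 + b_2, 2b_2 − 2b_1 + 2}, and let A_4 = A_3 ∪ {b_3 + b_2 − b_1, b_3 + 2b_2 − b_1, b_3 + 2b_1}. Then P(A_4) = [0, b_4 + b_3] \ {b_1, b_2, b_3, b_4, b_4 + b_3 − b_2, b_4 + b_3 − b_1}. -/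
set_option maxHeartbeats 2000000

lemma peel {a : ℕ} {s F : Finset ℕ} (ha : a ∉ s) (hF : F ⊆ insert a s) :
    ∃ c F', F' ⊆ s ∧ (c = 0 ∨ c = a) ∧ F.sum id = c + F'.sum id := by
  by_cases h : a ∈ F
  · refine ⟨a, F.erase a, ?_, Or.inr rfl, ?_⟩
    · intro x hx
      rcases Finset.mem_insert.1 (hF (Finset.mem_of_mem_erase hx)) with rfl | hxs
      · exact absurd rfl (Finset.mem_erase.1 hx).1
      · exact hxs
    · rw [← Finset.add_sum_erase _ _ h]; rfl
  · refine ⟨0, F, ?_, Or.inl rfl, by simp⟩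
    intro x hx
    rcases Finset.mem_insert.1 (hF hx) with rfl | hxs
    · exact absurd hx h
    · exact hxs

lemma fwd_arith (b1 s c1 c2 c3 c4 c5 c6 c7 c8 n : ℕ) (hb1 : 11 ≤ b1)
    (hs : s ≤ b1 - 1)
    (h1 : c1 = 0 ∨ c1 = b1 + 1) (h2 : c2 = 0 ∨ c2 = b1 + 2)
    (h3 : c3 = 0 ∨ c3 = b1 + 3) (h4 : c4 = 0 ∨ c4 = 4 * b1 + 5)
    (h5 : c5 = 0 ∨ c5 = 4 * b1 + 12) (h6 : c6 = 0 ∨ c6 = 11 * b1 + 22)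
    (h7 : c7 = 0 ∨ c7 = 14 * b1 + 27) (h8 : c8 = 0 ∨ c8 = 11 * b1 + 17)
    (hn : n = s + c1 + c2 + c3 + c4 + c5 + c6 + c7 + c8) :
    n ≤ 48 * b1 + 88 ∧ n ≠ b1 ∧ n ≠ 3 * b1 + 5 ∧ n ≠ 9 * b1 + 17 ∧
      n ≠ 39 * b1 + 71 ∧ n ≠ 45 * b1 + 83 ∧ n ≠ 47 * b1 + 88 := by
  subst hn
  rcases h1 with rfl | rfl <;> rcases h2 with rfl | rfl <;>
    rcases h3 with rfl | rfl <;> rcases h4 with rfl | rfl <;>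
    rcases h5 with rfl | rfl <;> rcases h6 with rfl | rfl <;>
    rcases h7 with rfl | rfl <;> rcases h8 with rfl | rfl <;> omega

lemma cond_list_sublist (f : Bool) (x : ℕ) : (cond f [x] []).Sublist [x] := by
  cases f
  · exact List.nil_sublist _
  · exact List.Sublist.refl _

lemma cond_list_sum (f : Bool) (x : ℕ) : (cond f [x] []).sum = cond f x 0 := by
  cases f <;> simp

theorem stmt_11 (b1 b2 b3 b4 : ℕ) (hb1 : 11 ≤ b1)
    (hb2 : b2 = 3 * b1 + 5) (hb3 : b3 = 3 * b2 + 2)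
    (hb4 : b4 = 3 * b3 + 4 * b2)
    (A1 : Finset ℕ)
    (hA1sub : ↑A1 ⊆ Set.Icc 1 (b1 - 1))
    (hA1 : subsetSums ↑A1 = Set.Icc 0 (b1 - 1)) :
    subsetSums
        ↑(A1 ∪ {b1 + 1, b1 + 2, b1 + 3, b1 + b2, 2 * b2 - 2 * b1 + 2,
            b3 + b2 - b1, b3 + 2 * b2 - b1, b3 + 2 * b1}) =
      Set.Icc 0 (b4 + b3) \
        {b1, b2, b3, b4, b4 + b3 - b2, b4 + b3 - b1} := by
  have hbigE : ∀ x ∈ ({b1 + 1, b1 + 2, b1 + 3, b1 + b2, 2 * b2 - 2 * b1 + 2, b3 + b2 - b1, b3 + 2 * b2 - b1, b3 + 2 * b1} : Finset ℕ), b1 + 1 ≤ x := by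
    intro x hx
    simp only [Finset.mem_insert, Finset.mem_singleton] at hx
    omega
  ext n
  simp only [subsetSums, Set.mem_setOf_eq, Set.mem_diff, Set.mem_Icc,
    Set.mem_insert_iff, Set.mem_singleton_iff, not_or]
  constructor
  · rintro ⟨F, hFsub, rfl⟩
    have hF' : F ⊆ A1 ∪ ({b1 + 1, b1 + 2, b1 + 3, b1 + b2, 2 * b2 - 2 * b1 + 2, b3 + b2 - b1, b3 + 2 * b2 - b1, b3 + 2 * b1} : Finset ℕ) := Finset.coe_subset.1 hFsub
    have hs1 : (F ∩ A1).sum id ∈ subsetSums ↑A1 :=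
      ⟨F ∩ A1, Finset.coe_subset.2 Finset.inter_subset_right, rfl⟩
    rw [hA1, Set.mem_Icc] at hs1
    have hsplit : (F ∩ A1).sum id + (F \ A1).sum id = F.sum id :=
      Finset.sum_inter_add_sum_sdiff F A1 id
    have hF2 : F \ A1 ⊆ ({b1 + 1, b1 + 2, b1 + 3, b1 + b2, 2 * b2 - 2 * b1 + 2, b3 + b2 - b1, b3 + 2 * b2 - b1, b3 + 2 * b1} : Finset ℕ) := by
      intro x hx
      rcases Finset.mem_union.1 (hF' (Finset.mem_sdiff.1 hx).1) with h | h
      · exact absurd h (Finset.mem_sdiff.1 hx).2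
      · exact h
    have hnm1 : (b1 + 1) ∉ ({b1 + 2, b1 + 3, b1 + b2, 2 * b2 - 2 * b1 + 2, b3 + b2 - b1, b3 + 2 * b2 - b1, b3 + 2 * b1} : Finset ℕ) := by
      simp only [Finset.mem_insert, Finset.mem_singleton]; omega
    obtain ⟨c1, G1, hG1, hc1, he1⟩ := peel hnm1 hF2
    have hnm2 : (b1 + 2) ∉ ({b1 + 3, b1 + b2, 2 * b2 - 2 * b1 + 2, b3 + b2 - b1, b3 + 2 * b2 - b1, b3 + 2 * b1} : Finset ℕ) := by
      simp only [Finset.mem_insert, Finset.mem_singleton]; omega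
    obtain ⟨c2, G2, hG2, hc2, he2⟩ := peel hnm2 hG1
    have hnm3 : (b1 + 3) ∉ ({b1 + b2, 2 * b2 - 2 * b1 + 2, b3 + b2 - b1, b3 + 2 * b2 - b1, b3 + 2 * b1} : Finset ℕ) := by
      simp only [Finset.mem_insert, Finset.mem_singleton]; omega
    obtain ⟨c3, G3, hG3, hc3, he3⟩ := peel hnm3 hG2
    have hnm4 : (b1 + b2) ∉ ({2 * b2 - 2 * b1 + 2, b3 + b2 - b1, b3 + 2 * b2 - b1, b3 + 2 * b1} : Finset ℕ) := by
      simp only [Finset.mem_insert, Finset.mem_singleton]; omega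
    obtain ⟨c4, G4, hG4, hc4, he4⟩ := peel hnm4 hG3
    have hnm5 : (2 * b2 - 2 * b1 + 2) ∉ ({b3 + b2 - b1, b3 + 2 * b2 - b1, b3 + 2 * b1} : Finset ℕ) := by
      simp only [Finset.mem_insert, Finset.mem_singleton]; omega
    obtain ⟨c5, G5, hG5, hc5, he5⟩ := peel hnm5 hG4
    have hnm6 : (b3 + b2 - b1) ∉ ({b3 + 2 * b2 - b1, b3 + 2 * b1} : Finset ℕ) := by
      simp only [Finset.mem_insert, Finset.mem_singleton]; omega
    obtain ⟨c6, G6, hG6, hc6, he6⟩ := peel hnm6 hG5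
    have hnm7 : (b3 + 2 * b2 - b1) ∉ ({b3 + 2 * b1} : Finset ℕ) := by
      simp only [Finset.mem_insert, Finset.mem_singleton]; omega
    obtain ⟨c7, G7, hG7, hc7, he7⟩ := peel hnm7 hG6
    have hc8 : G7.sum id = 0 ∨ G7.sum id = b3 + 2 * b1 := by
      rcases Finset.subset_singleton_iff.1 hG7 with rfl | rfl
      · exact Or.inl Finset.sum_empty
      · exact Or.inr (Finset.sum_singleton _ _)
    have hfa := fwd_arith b1 ((F ∩ A1).sum id) c1 c2 c3 c4 c5 c6 c7 (G7.sum id) (F.sum id)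
      hb1 hs1.2 hc1 hc2 hc3 (by omega) (by omega) (by omega) (by omega) (by omega) (by omega)
    omega
  · intro hn
    have key : ∀ l : List ℕ, l.Nodup → (∀ x ∈ l, x ∈ ({b1 + 1, b1 + 2, b1 + 3, b1 + b2, 2 * b2 - 2 * b1 + 2, b3 + b2 - b1, b3 + 2 * b2 - b1, b3 + 2 * b1} : Finset ℕ)) →
        l.sum ≤ n → n ≤ l.sum + b1 - 1 →
        ∃ F : Finset ℕ, ↑F ⊆ (↑(A1 ∪ ({b1 + 1, b1 + 2, b1 + 3, b1 + b2, 2 * b2 - 2 * b1 + 2, b3 + b2 - b1, b3 + 2 * b2 - b1, b3 + 2 * b1} : Finset ℕ)) : Set ℕ) ∧ F.sum id = n := by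
      intro l hnd hmem h1 h2
      have hs : n - l.sum ∈ subsetSums ↑A1 := by
        rw [hA1, Set.mem_Icc]; omega
      obtain ⟨F1, hF1, hF1s⟩ := hs
      have hF1' : F1 ⊆ A1 := Finset.coe_subset.1 hF1
      have hdisj : Disjoint F1 l.toFinset := by
        rw [Finset.disjoint_left]
        intro x hx hx2
        have h3 := hA1sub (hF1 hx)
        rw [Set.mem_Icc] at h3
        have h4 := hbigE x (hmem x (List.mem_toFinset.1 hx2))
        omega
      refine ⟨F1 ∪ l.toFinset, ?_, ?_⟩
      · rw [Finset.coe_subset]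
        apply Finset.union_subset (hF1'.trans Finset.subset_union_left)
        intro x hx
        exact Finset.mem_union_right _ (hmem x (List.mem_toFinset.1 hx))
      · rw [Finset.sum_union hdisj, hF1s, List.sum_toFinset _ hnd, List.map_id]
        omega
    have hfullnd : ([b1 + 1, b1 + 2, b1 + 3, b1 + b2, 2 * b2 - 2 * b1 + 2, b3 + b2 - b1, b3 + 2 * b2 - b1, b3 + 2 * b1] : List ℕ).Nodup := by
      simp only [List.nodup_cons, List.mem_cons, List.not_mem_nil, List.nodup_nil, not_or,
        or_false, and_true, not_false_eq_true] <;> omega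
    have hfullmem : ∀ x ∈ ([b1 + 1, b1 + 2, b1 + 3, b1 + b2, 2 * b2 - 2 * b1 + 2, b3 + b2 - b1, b3 + 2 * b2 - b1, b3 + 2 * b1] : List ℕ), x ∈ ({b1 + 1, b1 + 2, b1 + 3, b1 + b2, 2 * b2 - 2 * b1 + 2, b3 + b2 - b1, b3 + 2 * b2 - b1, b3 + 2 * b1} : Finset ℕ) := by
      intro x hx
      simp only [List.mem_cons, List.not_mem_nil, or_false] at hx
      simp only [Finset.mem_insert, Finset.mem_singleton]
      omega
    have key2 : ∀ f1 f2 f3 f4 f5 f6 f7 f8 : Bool,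
        (cond f1 (b1 + 1) 0) + (cond f2 (b1 + 2) 0) + (cond f3 (b1 + 3) 0) + (cond f4 (b1 + b2) 0) + (cond f5 (2 * b2 - 2 * b1 + 2) 0) + (cond f6 (b3 + b2 - b1) 0) + (cond f7 (b3 + 2 * b2 - b1) 0) + (cond f8 (b3 + 2 * b1) 0) ≤ n ∧ n ≤ (cond f1 (b1 + 1) 0) + (cond f2 (b1 + 2) 0) + (cond f3 (b1 + 3) 0) + (cond f4 (b1 + b2) 0) + (cond f5 (2 * b2 - 2 * b1 + 2) 0) + (cond f6 (b3 + b2 - b1) 0) + (cond f7 (b3 + 2 * b2 - b1) 0) + (cond f8 (b3 + 2 * b1) 0) + b1 - 1 →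
        ∃ F : Finset ℕ, ↑F ⊆ (↑(A1 ∪ ({b1 + 1, b1 + 2, b1 + 3, b1 + b2, 2 * b2 - 2 * b1 + 2, b3 + b2 - b1, b3 + 2 * b2 - b1, b3 + 2 * b1} : Finset ℕ)) : Set ℕ) ∧ F.sum id = n := by
      intro f1 f2 f3 f4 f5 f6 f7 f8 hB
      have hsl : (((cond f1 [b1 + 1] []) ++ ((cond f2 [b1 + 2] []) ++ ((cond f3 [b1 + 3] []) ++ ((cond f4 [b1 + b2] []) ++ ((cond f5 [2 * b2 - 2 * b1 + 2] []) ++ ((cond f6 [b3 + b2 - b1] []) ++ ((cond f7 [b3 + 2 * b2 - b1] []) ++ (cond f8 [b3 + 2 * b1] []))))))))).Sublist ([b1 + 1, b1 + 2, b1 + 3, b1 + b2, 2 * b2 - 2 * b1 + 2, b3 + b2 - b1, b3 + 2 * b2 - b1, b3 + 2 * b1] : List ℕ) :=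
        List.Sublist.append (cond_list_sublist _ _) (List.Sublist.append (cond_list_sublist _ _)
          (List.Sublist.append (cond_list_sublist _ _) (List.Sublist.append (cond_list_sublist _ _)
          (List.Sublist.append (cond_list_sublist _ _) (List.Sublist.append (cond_list_sublist _ _)
          (List.Sublist.append (cond_list_sublist _ _) (cond_list_sublist _ _)))))))
      have hsum : (((cond f1 [b1 + 1] []) ++ ((cond f2 [b1 + 2] []) ++ ((cond f3 [b1 + 3] []) ++ ((cond f4 [b1 + b2] []) ++ ((cond f5 [2 * b2 - 2 * b1 + 2] []) ++ ((cond f6 [b3 + b2 - b1] []) ++ ((cond f7 [b3 + 2 * b2 - b1] []) ++ (cond f8 [b3 + 2 * b1] []))))))))).sum = (cond f1 (b1 + 1) 0) + (cond f2 (b1 + 2) 0) + (cond f3 (b1 + 3) 0) + (cond f4 (b1 + b2) 0) + (cond f5 (2 * b2 - 2 * b1 + 2) 0) + (cond f6 (b3 + b2 - b1) 0) + (cond f7 (b3 + 2 * b2 - b1) 0) + (cond f8 (b3 + 2 * b1) 0) := by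
        simp only [List.sum_append, cond_list_sum]
        omega
      refine key (((cond f1 [b1 + 1] []) ++ ((cond f2 [b1 + 2] []) ++ ((cond f3 [b1 + 3] []) ++ ((cond f4 [b1 + b2] []) ++ ((cond f5 [2 * b2 - 2 * b1 + 2] []) ++ ((cond f6 [b3 + b2 - b1] []) ++ ((cond f7 [b3 + 2 * b2 - b1] []) ++ (cond f8 [b3 + 2 * b1] []))))))))) (hsl.nodup hfullnd) (fun x hx => hfullmem x (hsl.subset hx)) ?_ ?_
      · rw [hsum]; exact hB.1
      · rw [hsum]; omega
    by_cases hc0 : n < 1 * b1 + 1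
    · exact key2 false false false false false false false false (by simp only [Bool.cond_true, Bool.cond_false]; omega)
    by_cases hc1 : n < 1 * b1 + 3
    · exact key2 true false false false false false false false (by simp only [Bool.cond_true, Bool.cond_false]; omega)
    clear hc0
    by_cases hc2 : n < 2 * b1 + 3
    · exact key2 false false true false false false false false (by simp only [Bool.cond_true, Bool.cond_false]; omega)
    clear hc1
    by_cases hc3 : n < 2 * b1 + 5
    · exact key2 true true false false false false false false (by simp only [Bool.cond_true, Bool.cond_false]; omega)
    clear hc2
    by_cases hc4 : n < 3 * b1 + 6
    · exact key2 false true true false false false false false (by simp only [Bool.cond_true, Bool.cond_false]; omega)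
    clear hc3
    by_cases hc5 : n < 4 * b1 + 5
    · exact key2 true true true false false false false false (by simp only [Bool.cond_true, Bool.cond_false]; omega)
    clear hc4
    by_cases hc6 : n < 4 * b1 + 12
    · exact key2 false false false true false false false false (by simp only [Bool.cond_true, Bool.cond_false]; omega)
    clear hc5
    by_cases hc7 : n < 5 * b1 + 8
    · exact key2 false false false false true false false false (by simp only [Bool.cond_true, Bool.cond_false]; omega)
    clear hc6
    by_cases hc8 : n < 6 * b1 + 8
    · exact key2 false false true true false false false false (by simp only [Bool.cond_true, Bool.cond_false]; omega)
    clear hc7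
    by_cases hc9 : n < 6 * b1 + 17
    · exact key2 true true false true false false false false (by simp only [Bool.cond_true, Bool.cond_false]; omega)
    clear hc8
    by_cases hc10 : n < 7 * b1 + 11
    · exact key2 false true true false true false false false (by simp only [Bool.cond_true, Bool.cond_false]; omega)
    clear hc9
    by_cases hc11 : n < 7 * b1 + 18
    · exact key2 true true true true false false false false (by simp only [Bool.cond_true, Bool.cond_false]; omega)
    clear hc10
    by_cases hc12 : n < 8 * b1 + 17
    · exact key2 true true true false true false false false (by simp only [Bool.cond_true, Bool.cond_false]; omega)
    clear hc11
    by_cases hc13 : n < 9 * b1 + 18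
    · exact key2 false false false true true false false false (by simp only [Bool.cond_true, Bool.cond_false]; omega)
    clear hc12
    by_cases hc14 : n < 9 * b1 + 20
    · exact key2 true false false true true false false false (by simp only [Bool.cond_true, Bool.cond_false]; omega)
    clear hc13
    by_cases hc15 : n < 10 * b1 + 20
    · exact key2 false false true true true false false false (by simp only [Bool.cond_true, Bool.cond_false]; omega)
    clear hc14
    by_cases hc16 : n < 11 * b1 + 17
    · exact key2 true true false true true false false false (by simp only [Bool.cond_true, Bool.cond_false]; omega)
    clear hc15
    by_cases hc17 : n < 11 * b1 + 23
    · exact key2 false false false false false false false true (by simp only [Bool.cond_true, Bool.cond_false]; omega)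
    clear hc16
    by_cases hc18 : n < 12 * b1 + 23
    · exact key2 true true true true true false false false (by simp only [Bool.cond_true, Bool.cond_false]; omega)
    clear hc17
    by_cases hc19 : n < 13 * b1 + 22
    · exact key2 true false false false false true false false (by simp only [Bool.cond_true, Bool.cond_false]; omega)
    clear hc18
    by_cases hc20 : n < 13 * b1 + 27
    · exact key2 false true true false false false false true (by simp only [Bool.cond_true, Bool.cond_false]; omega)
    clear hc19
    by_cases hc21 : n < 14 * b1 + 27
    · exact key2 false true true false false true false false (by simp only [Bool.cond_true, Bool.cond_false]; omega)
    clear hc20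
    by_cases hc22 : n < 15 * b1 + 27
    · exact key2 false false false false false false true false (by simp only [Bool.cond_true, Bool.cond_false]; omega)
    clear hc21
    by_cases hc23 : n < 16 * b1 + 25
    · exact key2 false false false true false true false false (by simp only [Bool.cond_true, Bool.cond_false]; omega)
    clear hc22
    by_cases hc24 : n < 17 * b1 + 25
    · exact key2 false false true true false false false true (by simp only [Bool.cond_true, Bool.cond_false]; omega)
    clear hc23
    by_cases hc25 : n < 17 * b1 + 34
    · exact key2 true true false true false false false true (by simp only [Bool.cond_true, Bool.cond_false]; omega)
    clear hc24
    by_cases hc26 : n < 18 * b1 + 33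
    · exact key2 false true true false true false false true (by simp only [Bool.cond_true, Bool.cond_false]; omega)
    clear hc25
    by_cases hc27 : n < 19 * b1 + 33
    · exact key2 true true true true false true false false (by simp only [Bool.cond_true, Bool.cond_false]; omega)
    clear hc26
    by_cases hc28 : n < 19 * b1 + 42
    · exact key2 true false false true false false true false (by simp only [Bool.cond_true, Bool.cond_false]; omega)
    clear hc27
    by_cases hc29 : n < 20 * b1 + 42
    · exact key2 false false true false true false true false (by simp only [Bool.cond_true, Bool.cond_false]; omega)
    clear hc28
    by_cases hc30 : n < 21 * b1 + 42
    · exact key2 true true false false true false true false (by simp only [Bool.cond_true, Bool.cond_false]; omega)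
    clear hc29
    by_cases hc31 : n < 22 * b1 + 40
    · exact key2 true true false true true true false false (by simp only [Bool.cond_true, Bool.cond_false]; omega)
    clear hc30
    by_cases hc32 : n < 23 * b1 + 40
    · exact key2 true true true true true false false true (by simp only [Bool.cond_true, Bool.cond_false]; omega)
    clear hc31
    by_cases hc33 : n < 23 * b1 + 47
    · exact key2 true false false false false true false true (by simp only [Bool.cond_true, Bool.cond_false]; omega)
    clear hc32
    by_cases hc34 : n < 24 * b1 + 47
    · exact key2 false false true true true false true false (by simp only [Bool.cond_true, Bool.cond_false]; omega)
    clear hc33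
    by_cases hc35 : n < 25 * b1 + 45
    · exact key2 true true false true true false true false (by simp only [Bool.cond_true, Bool.cond_false]; omega)
    clear hc34
    by_cases hc36 : n < 26 * b1 + 45
    · exact key2 true true true false false true false true (by simp only [Bool.cond_true, Bool.cond_false]; omega)
    clear hc35
    by_cases hc37 : n < 27 * b1 + 45
    · exact key2 true false false false false false true true (by simp only [Bool.cond_true, Bool.cond_false]; omega)
    clear hc36
    by_cases hc38 : n < 27 * b1 + 54
    · exact key2 true false false true false true false true (by simp only [Bool.cond_true, Bool.cond_false]; omega)
    clear hc37
    by_cases hc39 : n < 28 * b1 + 54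
    · exact key2 false true true false false true true false (by simp only [Bool.cond_true, Bool.cond_false]; omega)
    clear hc38
    by_cases hc40 : n < 29 * b1 + 54
    · exact key2 true true false false true true false true (by simp only [Bool.cond_true, Bool.cond_false]; omega)
    clear hc39
    by_cases hc41 : n < 30 * b1 + 52
    · exact key2 false false false true false true true false (by simp only [Bool.cond_true, Bool.cond_false]; omega)
    clear hc40
    by_cases hc42 : n < 31 * b1 + 52
    · exact key2 false false true true false false true true (by simp only [Bool.cond_true, Bool.cond_false]; omega)
    clear hc41
    by_cases hc43 : n < 31 * b1 + 61
    · exact key2 true true false true false false true true (by simp only [Bool.cond_true, Bool.cond_false]; omega)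
    clear hc42
    by_cases hc44 : n < 32 * b1 + 61
    · exact key2 false true true false true false true true (by simp only [Bool.cond_true, Bool.cond_false]; omega)
    clear hc43
    by_cases hc45 : n < 33 * b1 + 61
    · exact key2 false true true true true true false true (by simp only [Bool.cond_true, Bool.cond_false]; omega)
    clear hc44
    by_cases hc46 : n < 33 * b1 + 66
    · exact key2 false false false true true false true true (by simp only [Bool.cond_true, Bool.cond_false]; omega)
    clear hc45
    by_cases hc47 : n < 34 * b1 + 64
    · exact key2 false false false true true true true false (by simp only [Bool.cond_true, Bool.cond_false]; omega)
    clear hc46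
    by_cases hc48 : n < 35 * b1 + 64
    · exact key2 false false true true true false true true (by simp only [Bool.cond_true, Bool.cond_false]; omega)
    clear hc47
    by_cases hc49 : n < 35 * b1 + 71
    · exact key2 true true false true true false true true (by simp only [Bool.cond_true, Bool.cond_false]; omega)
    clear hc48
    by_cases hc50 : n < 36 * b1 + 67
    · exact key2 false true true true true true true false (by simp only [Bool.cond_true, Bool.cond_false]; omega)
    clear hc49
    by_cases hc51 : n < 37 * b1 + 67
    · exact key2 true true true true true false true true (by simp only [Bool.cond_true, Bool.cond_false]; omega)
    clear hc50
    by_cases hc52 : n < 37 * b1 + 69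
    · exact key2 true false false false false true true true (by simp only [Bool.cond_true, Bool.cond_false]; omega)
    clear hc51
    by_cases hc53 : n < 38 * b1 + 69
    · exact key2 false false true false false true true true (by simp only [Bool.cond_true, Bool.cond_false]; omega)
    clear hc52
    by_cases hc54 : n < 38 * b1 + 71
    · exact key2 true true false false false true true true (by simp only [Bool.cond_true, Bool.cond_false]; omega)
    clear hc53
    by_cases hc55 : n < 39 * b1 + 72
    · exact key2 false true true false false true true true (by simp only [Bool.cond_true, Bool.cond_false]; omega)
    clear hc54
    by_cases hc56 : n < 40 * b1 + 71
    · exact key2 true true true false false true true true (by simp only [Bool.cond_true, Bool.cond_false]; omega)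
    clear hc55
    by_cases hc57 : n < 40 * b1 + 78
    · exact key2 false false false true false true true true (by simp only [Bool.cond_true, Bool.cond_false]; omega)
    clear hc56
    by_cases hc58 : n < 41 * b1 + 74
    · exact key2 false false false false true true true true (by simp only [Bool.cond_true, Bool.cond_false]; omega)
    clear hc57
    by_cases hc59 : n < 42 * b1 + 74
    · exact key2 false false true true false true true true (by simp only [Bool.cond_true, Bool.cond_false]; omega)
    clear hc58
    by_cases hc60 : n < 42 * b1 + 83
    · exact key2 true true false true false true true true (by simp only [Bool.cond_true, Bool.cond_false]; omega)
    clear hc59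
    by_cases hc61 : n < 43 * b1 + 77
    · exact key2 false true true false true true true true (by simp only [Bool.cond_true, Bool.cond_false]; omega)
    clear hc60
    by_cases hc62 : n < 43 * b1 + 84
    · exact key2 true true true true false true true true (by simp only [Bool.cond_true, Bool.cond_false]; omega)
    clear hc61
    by_cases hc63 : n < 44 * b1 + 83
    · exact key2 true true true false true true true true (by simp only [Bool.cond_true, Bool.cond_false]; omega)
    clear hc62
    by_cases hc64 : n < 45 * b1 + 84
    · exact key2 false false false true true true true true (by simp only [Bool.cond_true, Bool.cond_false]; omega)
    clear hc63
    by_cases hc65 : n < 45 * b1 + 86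
    · exact key2 true false false true true true true true (by simp only [Bool.cond_true, Bool.cond_false]; omega)
    clear hc64
    by_cases hc66 : n < 46 * b1 + 86
    · exact key2 false false true true true true true true (by simp only [Bool.cond_true, Bool.cond_false]; omega)
    clear hc65
    by_cases hc67 : n < 46 * b1 + 88
    · exact key2 true true false true true true true true (by simp only [Bool.cond_true, Bool.cond_false]; omega)
    clear hc66
    by_cases hc68 : n < 47 * b1 + 89
    · exact key2 false true true true true true true true (by simp only [Bool.cond_true, Bool.cond_false]; omega)
    exact key2 true true true true true true true true (by simp only [Bool.cond_true, Bool.cond_false]; omega)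
end
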